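/- Let M be a nonwrapping multiline queue and let s_1, s_2 be two strands of M of lengths k and ℓ respectively with k ≥ ℓ, and with row-1 balls y_1 and y_2 respectively. For 1 ≤ t ≤ ℓ, say s_1 and s_2 intersect between rows t and t−1 (for t > 1) if the left-to-right order of the ball of s_1 and the ball of s_2 in row t differs from their left-to-right order in row t−1. Then s_1 and s_2 intersect at most once, i.e. there is at most one index t with 1 < t ≤ ℓ at which they intersect; moreover, if they intersect then y_1 lies strictly to the left of y_2. -/

import Mathlib

open scoped BigOperators

namespace MultilineQueue

/-! ### Basic combinatorial utilities -/

/-- The list of columns `1, …, n`. -/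
def colsList (n : ℕ) : List ℕ := (List.range n).map (· + 1)

/-- Insert `x` into a weakly decreasing list, keeping it weakly decreasing. -/
def insDesc (x : ℕ) : List ℕ → List ℕ
  | [] => [x]
  | y :: ys => if y ≤ x then x :: y :: ys else y :: insDesc x ys

/-- Sort a list of naturals in weakly decreasing order. -/
def sortDesc : List ℕ → List ℕ
  | [] => []
  | x :: xs => insDesc x (sortDesc xs)

/-- The positive parts of a weak composition `α` (supported on columns `1,…,n`). -/
def compParts (n : ℕ) (α : ℕ → ℕ) : List ℕ :=
  ((colsList n).map α).filter (fun x => 0 < x)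

/-- `sort(α)`: the partition obtained by sorting the positive parts of `α` decreasingly. -/
def sortComp (n : ℕ) (α : ℕ → ℕ) : List ℕ := sortDesc (compParts n α)

/-- The conjugate partition: `(conj l).get j = #{i : l i ≥ j+1}`, for `j = 0,…,l₁-1`. -/
def conj (l : List ℕ) : List ℕ :=
  (List.range (l.headD 0)).map (fun j => (l.filter (fun x => j < x)).length)

/-- A list is a partition: weakly decreasing with positive parts. -/
def IsPartitionL (l : List ℕ) : Prop := l.Pairwise (· ≥ ·) ∧ ∀ x ∈ l, 0 < x

/-- Dominance order on partitions: `mu ⊴ lam` (same size, partial sums dominated). -/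
def Dominates (lam mu : List ℕ) : Prop :=
  mu.sum = lam.sum ∧ ∀ k, (mu.take k).sum ≤ (lam.take k).sum

/-- A weak composition with `n` parts: a function `ℕ → ℕ` supported on `{1,…,n}`. -/
def IsWeakComp (n : ℕ) (α : ℕ → ℕ) : Prop := ∀ j, (j = 0 ∨ n < j) → α j = 0

/-- The simple transposition `s_i` acting on a weak composition, exchanging
the entries at positions `i` and `i+1`. -/
def swapComp (i : ℕ) (α : ℕ → ℕ) : ℕ → ℕ :=
  fun j => if j = i then α (i + 1) else if j = i + 1 then α i else α j

/-- A strong composition `τ` (a list), regarded as a weak composition with `n`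
parts by appending zeros. -/
def padComp (n : ℕ) (τ : List ℕ) : ℕ → ℕ :=
  fun j => if 1 ≤ j ∧ j ≤ n then τ.getD (j - 1) 0 else 0

/-! ### Bracket matching between two rows -/

/-- Classical bracket matching between a bottom row `a` (closing letters) and a top
row `b` (opening letters), reading columns `1,…,n` left to right, and within each
column the top letter before the bottom letter.  Returns the tuple
`(stack of unmatched opening positions (head = most recent),
  matched positions of `b`, matched positions of `a`,
  unmatched positions of `a` in left-to-right order)`. -/
def scan (n : ℕ) (a b : Finset ℕ) : List ℕ × Finset ℕ × Finset ℕ × List ℕ :=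
  (colsList n).foldl
    (fun st j =>
      let stk : List ℕ := if j ∈ b then j :: st.1 else st.1
      if j ∈ a then
        match stk with
        | [] => ([], st.2.1, st.2.2.1, st.2.2.2 ++ [j])
        | x :: rest => (rest, insert x st.2.1, insert j st.2.2.1, st.2.2.2)
      else (stk, st.2.1, st.2.2.1, st.2.2.2))
    ([], ∅, ∅, [])

/-- `θ(a⊗b)`: the set of elements of the bottom row `a` classically matched when the
top row `b` is bracketed against it. -/
def theta (n : ℕ) (a b : Finset ℕ) : Finset ℕ := (scan n a b).2.2.1

/-- The set of elements of the top row `b` that are classically matched. -/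
def matchedTop (n : ℕ) (a b : Finset ℕ) : Finset ℕ := (scan n a b).2.1

/-- `R(a,b)`: cylindrical bracket matching; the unmatched opening parentheses wrap
around and match the leftmost unmatched closing parentheses. -/
def Rcyl (n : ℕ) (a b : Finset ℕ) : Finset ℕ :=
  (scan n a b).2.2.1 ∪ ((scan n a b).2.2.2.take (scan n a b).1.length).toFinset

/-- `θ(b₁⊗…⊗b_L)`, extended recursively:
`θ(b₁⊗…⊗b_L) = θ(b₁ ⊗ θ(b₂⊗…⊗b_L))`. -/
def thetaTup (n : ℕ) : List (Finset ℕ) → Finset ℕ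
  | [] => ∅
  | [b] => b
  | b :: c :: rest => theta n b (thetaTup n (c :: rest))

/-- `R(b₁,…,b_L)`, extended recursively: `R(b₁,…,b_L) = R(b₁, R(b₂,…,b_L))`. -/
def Rtup (n : ℕ) : List (Finset ℕ) → Finset ℕ
  | [] => ∅
  | [b] => b
  | b :: c :: rest => Rcyl n b (Rtup n (c :: rest))

/-! ### Multiline queues, the FM labelling, type and major index

A multiline queue (or generalized multiline queue) is recorded as a list of
rows, bottom row first; each row is the set of columns containing a ball. -/

/-- The FM label of the ball of the bottom row of `rows` in column `c`
(`0` if there is no ball there): by the corner transfer matrix description of the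
Ferrari–Martin algorithm, the bottom-row balls of label `≥ k` are exactly
`R(B₁,…,B_k)`, so the label is the largest such `k`. -/
def botLabel (n : ℕ) (rows : List (Finset ℕ)) (c : ℕ) : ℕ :=
  (Finset.range (rows.length + 1)).sup
    (fun k => if c ∈ Rtup n (rows.take k) then k else 0)

/-- `type(M)`: the weak composition of FM labels on the bottom row. -/
def typeOf (n : ℕ) (rows : List (Finset ℕ)) : ℕ → ℕ := botLabel n rows

/-- `L_M(r,c)`: the FM label of the ball at row `r` (1-indexed from the bottom),
column `c`; `0` if the site is empty. The labels of row `r` only depend on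
rows `r, r+1, …`, for which `c` sits on the bottom row; a strand of length `h`
through row `r` truncates to a strand of length `h − (r−1)` there. -/
def labelAt (n : ℕ) (rows : List (Finset ℕ)) (r c : ℕ) : ℕ :=
  if 1 ≤ r ∧ 0 < botLabel n (rows.drop (r - 1)) c then
    botLabel n (rows.drop (r - 1)) c + (r - 1)
  else 0

/-- `strtype(M)`: the strong type, i.e. the type with its zero entries deleted. -/
def strtypeOf (n : ℕ) (rows : List (Finset ℕ)) : List ℕ :=
  ((colsList n).map (typeOf n rows)).filter (fun x => x ≠ 0)

/-- `I_k(M)`: the set of columns whose bottom-row label is exactly `k`. -/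
def Iset (n : ℕ) (rows : List (Finset ℕ)) (k : ℕ) : Finset ℕ :=
  (Finset.Icc 1 n).filter (fun c => typeOf n rows c = k)

/-- The set of balls of row `r` (1-indexed) of `M` having label `≥ ℓ`. -/
def Sset (n : ℕ) (rows : List (Finset ℕ)) (r ℓ : ℕ) : Finset ℕ :=
  if ℓ ≤ rows.length then Rtup n ((rows.drop (r - 1)).take (ℓ + 1 - r)) else ∅

/-- The number of balls of row `r` with label `≥ ℓ` whose FM pairing into row
`r−1` wraps around the cylinder: these are precisely the ones that cannot be
matched classically. -/
def wrapCount (n : ℕ) (rows : List (Finset ℕ)) (r ℓ : ℕ) : ℕ :=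
  (Sset n rows r ℓ).card - (theta n (rows.getD (r - 2) ∅) (Sset n rows r ℓ)).card

/-- `m_{ℓ,r}`: the number of balls labelled exactly `ℓ` in row `r` whose FM pairing
into row `r−1` wraps. -/
def mWrap (n : ℕ) (rows : List (Finset ℕ)) (ℓ r : ℕ) : ℕ :=
  wrapCount n rows r ℓ - wrapCount n rows r (ℓ + 1)

/-- The major index `maj(M) = Σ_{2≤ℓ≤L} Σ_{2≤r≤ℓ} m_{ℓ,r}·(ℓ−r+1)`. -/
def maj (n : ℕ) (rows : List (Finset ℕ)) : ℕ :=
  ∑ ℓ ∈ Finset.Icc 2 rows.length, ∑ r ∈ Finset.Icc 2 ℓ, mWrap n rows ℓ r * (ℓ - r + 1)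

/-- `M` is a multiline queue of shape `(lam, n)`: it has `lam₁` rows, all contained
in `{1,…,n}`, and row `j` has `lam'_j` balls. -/
def IsMLQ (n : ℕ) (lam : List ℕ) (rows : List (Finset ℕ)) : Prop :=
  rows.length = lam.headD 0 ∧ (∀ B ∈ rows, B ⊆ Finset.Icc 1 n) ∧
    ∀ j, j < rows.length → (rows.getD j ∅).card = (lam.filter (fun x => j < x)).length

/-- The unique straight (nonwrapping, vertical-strand) multiline queue of type `α`:
its `j`-th row is `{c : α c ≥ j}`. -/
def straight (n : ℕ) (α : ℕ → ℕ) : List (Finset ℕ) :=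
  (List.range ((sortComp n α).headD 0)).map
    (fun j => (Finset.Icc 1 n).filter (fun c => j + 1 ≤ α c))

/-! ### Row dropping operators and the collapsing map -/

/-- The saturated row dropping operator `e_i^{↓*}` (for `1 ≤ i < rows.length`):
the pair of rows `(B_i, B_{i+1})` is replaced by `(B_i ∪ u, m)`, where `m` and `u`
are the matched, resp. unmatched, elements of `B_{i+1}` against `B_i`. -/
def eStar (n : ℕ) (i : ℕ) (rows : List (Finset ℕ)) : List (Finset ℕ) :=
  if 1 ≤ i ∧ i < rows.length then
    let a := rows.getD (i - 1) ∅
    let b := rows.getD i ∅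
    let m := matchedTop n a b
    (rows.set (i - 1) (a ∪ (b \ m))).set i m
  else rows

/-- `e^{↓*}_{[b,1]} = e^{↓*}_1 ∘ e^{↓*}_2 ∘ ⋯ ∘ e^{↓*}_b` (applying `e^{↓*}_b` first). -/
def eStarSeq (n b : ℕ) (rows : List (Finset ℕ)) : List (Finset ℕ) :=
  (List.range b).foldl (fun r k => eStar n (b - k) r) rows

/-- The collapsing operator
`ρ_N = e^{↓*}_{[L−1,1]} ∘ ⋯ ∘ e^{↓*}_{[2,1]} ∘ e^{↓*}_{[1,1]}`; the resulting
empty rows at the top are discarded, so that the result is an honest nonwrapping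
multiline queue of its own (smaller) shape. -/
def rhoN (n : ℕ) (rows : List (Finset ℕ)) : List (Finset ℕ) :=
  ((List.range (rows.length - 1)).foldl (fun r i => eStarSeq n (i + 1) r) rows).filter
    (fun B => B ≠ ∅)

/-- `π^{(k)}(M)`: the bottom `k` rows of `M`. -/
def trunc (rows : List (Finset ℕ)) (k : ℕ) : List (Finset ℕ) := rows.take k

/-- `ρ^{(k)}(M) = ρ_N(π^{(k)}(M))`. -/
def rhoTrunc (n : ℕ) (rows : List (Finset ℕ)) (k : ℕ) : List (Finset ℕ) :=
  rhoN n (trunc rows k)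

/-- The intermediate stages `M₁ = M, M₂ = e^{↓*}_{[1,1]}(M₁), …, M_L` of the
collapsing procedure. -/
def stages (n : ℕ) (rows : List (Finset ℕ)) : List (List (Finset ℕ)) :=
  (List.range (rows.length - 1)).scanl (fun r i => eStarSeq n (i + 1) r) rows

/-- The recording tableau `ρ_Q(M)`, as a list of rows (bottom row first):
row `j+1` receives `|row_{j+1}(M_{j+1})|` boxes with entry `j+1`, and then, at each
later stage `s+1`, `|row_{j+1}(M_{s+1})| − |row_{j+1}(M_s)|` boxes with entry `s+1`. -/
def rhoQ (n : ℕ) (rows : List (Finset ℕ)) : List (List ℕ) :=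
  let st := stages n rows
  let L := rows.length
  let size : ℕ → ℕ → ℕ := fun j s => ((st.getD s []).getD j ∅).card
  ((List.range L).map (fun j =>
    List.replicate (size j j) (j + 1) ++
      (((List.range L).filter (fun s => j < s)).map
        (fun s => List.replicate (size j s - size j (s - 1)) (s + 1))).flatten)).filter
    (fun row => row ≠ [])

/-! ### Column crystal operators -/

/-- Bracket the letters `i` (closing) against `i+1` (opening) in the row word of
`M` (rows top to bottom, right to left within each row).  Returns
`(stack of list-indices of rows with unmatched balls in column i+1 (head = most recent),
  list-indices of rows with unmatched balls in column i, in word order)`. -/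
def colScan (n : ℕ) (i : ℕ) (rows : List (Finset ℕ)) : List ℕ × List ℕ :=
  ((List.range rows.length).reverse).foldl
    (fun st r =>
      let stk : List ℕ := if i + 1 ∈ rows.getD r ∅ then r :: st.1 else st.1
      if i ∈ rows.getD r ∅ then
        match stk with
        | [] => ([], st.2 ++ [r])
        | _ :: rest => (rest, st.2)
      else (stk, st.2))
    ([], [])

/-- The column raising operator `e_i^←`: moves the ball corresponding to the
leftmost unmatched `i+1` of `θ_i(rw(M))` from column `i+1` to column `i`
(identity if there is none). -/
def eCol (n : ℕ) (i : ℕ) (rows : List (Finset ℕ)) : List (Finset ℕ) :=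
  match (colScan n i rows).1.getLast? with
  | none => rows
  | some r => rows.set r (insert i ((rows.getD r ∅).erase (i + 1)))

/-- The column lowering operator `f_i^→`: moves the ball corresponding to the
rightmost unmatched `i` of `θ_i(rw(M))` from column `i` to column `i+1`
(identity if there is none). -/
def fCol (n : ℕ) (i : ℕ) (rows : List (Finset ℕ)) : List (Finset ℕ) :=
  match (colScan n i rows).2.getLast? with
  | none => rows
  | some r => rows.set r (insert (i + 1) ((rows.getD r ∅).erase i))

/-- The 1-indexed row of the ball moved by `e_i^←`, if any. -/
def movedRowE (n : ℕ) (i : ℕ) (rows : List (Finset ℕ)) : Option ℕ :=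
  ((colScan n i rows).1.getLast?).map (· + 1)

/-- `M` is `e_i^←`-full: `type(M)_i < type(M)_{i+1}` and `θ_i(rw(M))` contains
exactly one unmatched `i+1`. -/
def isEFull (n : ℕ) (i : ℕ) (rows : List (Finset ℕ)) : Prop :=
  typeOf n rows i < typeOf n rows (i + 1) ∧ (colScan n i rows).1.length = 1

/-- `M` is `f_i^→`-full: `f_i^→(M)` is `e_i^←`-full. -/
def isFFull (n : ℕ) (i : ℕ) (rows : List (Finset ℕ)) : Prop :=
  isEFull n i (fCol n i rows)

/-- The bottom row `p` of the `i`-active region `act_i(M)`, given the row `r` of the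
moved ball and its label `ℓ`: the maximal `p ≤ r` with `L_M(p−1,i) = 0` or
`L_M(p−1,i) ≥ ℓ` (noting `L_M(0,i) = 0`, so `p = 1` always qualifies). -/
def actLow (n : ℕ) (rows : List (Finset ℕ)) (i r ℓ : ℕ) : ℕ :=
  ((Finset.Icc 1 r).filter
    (fun p => labelAt n rows (p - 1) i = 0 ∨ ℓ ≤ labelAt n rows (p - 1) i)).sup id

/-! ### FM pairings and strands -/

/-- The first element of `s` weakly to the right of `c`, cyclically. -/
def cycNext (s : Finset ℕ) (c : ℕ) : Option ℕ :=
  if h : (s.filter (fun x => c ≤ x)).Nonempty then some ((s.filter (fun x => c ≤ x)).min' h)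
  else if h2 : s.Nonempty then some (s.min' h2) else none

/-- Stable insertion into a list sorted weakly decreasingly by `key`. -/
def insKey (key : ℕ → ℕ) (x : ℕ) : List ℕ → List ℕ
  | [] => [x]
  | y :: ys => if key y ≤ key x then x :: y :: ys else y :: insKey key x ys

/-- Stable sort, weakly decreasing by `key`. -/
def sortKeyDesc (key : ℕ → ℕ) : List ℕ → List ℕ
  | [] => []
  | x :: xs => insKey key x (sortKeyDesc key xs)

/-- The FM pairings from row `r+1` to row `r` (1-indexed `r ≥ 1`): the balls of row
`r+1` are processed in decreasing order of label (left to right among equal labels),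
each pairing to the first unpaired ball of row `r` weakly to its right, cyclically.
Returns the list of pairs `(source column in row r+1, target column in row r)`. -/
def pairsAt (n : ℕ) (rows : List (Finset ℕ)) (r : ℕ) : List (ℕ × ℕ) :=
  let top := rows.getD r ∅
  let bot := rows.getD (r - 1) ∅
  let order := sortKeyDesc (fun c => labelAt n rows (r + 1) c)
    ((colsList n).filter (fun c => decide (c ∈ top)))
  (order.foldl (fun (st : Finset ℕ × List (ℕ × ℕ)) c =>
      match cycNext st.1 c with
      | some t => (st.1.erase t, st.2 ++ [(c, t)])
      | none => st) (bot, [])).2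

/-- The column of the ball of row `r` to which the ball of row `r+1` in column `c`
is paired by the FM algorithm. -/
def pairedTo (n : ℕ) (rows : List (Finset ℕ)) (r c : ℕ) : Option ℕ :=
  ((pairsAt n rows r).find? (fun p => decide (p.1 = c))).map (·.2)

/-- A strand of `M`: a nonempty sequence of columns `s = [c₁, …, c_h]` with the ball
`c_t` in row `t`, the ball `c_{t+1}` paired to `c_t` for each `t`, and the top ball
`c_h` not paired to from row `h+1`. -/
def IsStrand (n : ℕ) (rows : List (Finset ℕ)) (s : List ℕ) : Prop :=
  s ≠ [] ∧
  (∀ t, t < s.length → s.getD t 0 ∈ rows.getD t ∅) ∧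
  (∀ t, t + 1 < s.length → pairedTo n rows (t + 1) (s.getD (t + 1) 0) = some (s.getD t 0)) ∧
  (∀ c, pairedTo n rows s.length c ≠ some (s.getD (s.length - 1) 0))

/-! ### Semistandard Young tableaux and the charge statistic -/

/-- `Q` is a semistandard Young tableau of shape `sh` and content `ct`, recorded as a
list of rows (bottom row first, French convention), each row a list of entries:
rows weakly increase, columns strictly increase from bottom to top, and for every
`m ≥ 1` the entry `m` occurs `ct_{m}` times. -/
def IsSSYT (Q : List (List ℕ)) (sh ct : List ℕ) : Prop :=
  Q.map List.length = sh ∧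
  (∀ row ∈ Q, row.Pairwise (· ≤ ·)) ∧
  (∀ row ∈ Q, ∀ x ∈ row, 0 < x) ∧
  (∀ j k, j + 1 < Q.length → k < (Q.getD (j + 1) []).length →
      (Q.getD j []).getD k 0 < (Q.getD (j + 1) []).getD k 0) ∧
  (∀ m, 0 < m → ((Q.flatten).filter (fun x => x = m)).length = ct.getD (m - 1) 0)

/-- Find the rightmost occurrence of the value `v` at a position `≤ pos` in the
indexed word `l`; if none, wrap around (cyclically) and take the rightmost
occurrence of `v` overall.  Returns the position together with a flag recording
whether the search wrapped. -/
def chargeFind (l : List (ℕ × ℕ)) (v pos : ℕ) : Option (ℕ × Bool) :=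
  match (l.filter (fun p => decide (p.2 = v ∧ p.1 ≤ pos))).getLast? with
  | some p => some (p.1, false)
  | none =>
    match (l.filter (fun p => decide (p.2 = v))).getLast? with
    | some p => some (p.1, true)
    | none => none

/-- Extract (the rest of) one standard subword, consisting of the letters
`v, v+1, v+2, …`, scanning right to left cyclically from position `pos`; `idx` is
the charge index of the previously extracted letter, incremented whenever the next
letter is found to its right (i.e. when the leftward search wraps around), kept
otherwise.  Returns the total charge contribution of the extracted letters
together with the remaining word. -/
def extractCharge : ℕ → List (ℕ × ℕ) → ℕ → ℕ → ℕ → ℕ × List (ℕ × ℕ)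
  | 0, l, _, _, _ => (0, l)
  | fuel + 1, l, v, pos, idx =>
    match chargeFind l v pos with
    | none => (0, l)
    | some pw =>
      let idx' := if pw.2 then idx + 1 else idx
      let r := extractCharge fuel (l.filter (fun q => decide (q.1 ≠ pw.1))) (v + 1)
        (pw.1 - 1) idx'
      (idx' + r.1, r.2)

/-- The Lascoux–Schützenberger charge of an indexed word: repeatedly extract a
standard subword (starting from the rightmost `1`, whose index is `0`) and add up
the charge contributions. -/
def chargeWordAux : ℕ → List (ℕ × ℕ) → ℕ
  | 0, _ => 0
  | fuel + 1, l =>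
    match chargeFind l 1 l.length with
    | none => 0
    | some pw =>
      let r := extractCharge l.length (l.filter (fun q => decide (q.1 ≠ pw.1))) 2
        (pw.1 - 1) 0
      r.1 + chargeWordAux fuel r.2

/-- The charge of a word. -/
def chargeWord (w : List ℕ) : ℕ := chargeWordAux w.length (w.zipIdx.map Prod.swap)

/-- The charge of a tableau: the charge of its reading word (rows read top to
bottom, left to right within each row). -/
def tabCharge (Q : List (List ℕ)) : ℕ := chargeWord Q.reverse.flatten

/-! ### Polynomials -/

/-- The content monomial `x^M = Π_j Π_{c ∈ B_j} x_c`, with coefficients in `ℤ[q]`. -/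
noncomputable def xM (n : ℕ) (rows : List (Finset ℕ)) :
    MvPolynomial ℕ (Polynomial ℤ) :=
  (rows.map (fun B => ∏ c ∈ B, (MvPolynomial.X c : MvPolynomial ℕ (Polynomial ℤ)))).prod

/-- `q^k` as a coefficient. -/
noncomputable def qpow (k : ℕ) : Polynomial ℤ := Polynomial.X ^ k

/-- The `t = 0` ASEP polynomial `f_α(X;q,0) = Σ_{M ∈ MLQ(α)} q^{maj(M)} x^M`. -/
noncomputable def fASEP (n : ℕ) (α : ℕ → ℕ) : MvPolynomial ℕ (Polynomial ℤ) :=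
  ∑ᶠ (rows : List (Finset ℕ))
    (_ : IsMLQ n (sortComp n α) rows ∧ typeOf n rows = α),
    MvPolynomial.C (qpow (maj n rows)) * xM n rows

/-- The Demazure atom `𝒜_β(X) = Σ_{M ∈ NMLQ(β)} x^M`. -/
noncomputable def atom (n : ℕ) (β : ℕ → ℕ) : MvPolynomial ℕ (Polynomial ℤ) :=
  ∑ᶠ (rows : List (Finset ℕ))
    (_ : IsMLQ n (sortComp n β) rows ∧ maj n rows = 0 ∧ typeOf n rows = β),
    xM n rows

/-- The `t = 0` quasisymmetric Macdonald polynomial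
`G_γ(X;q,0) = Σ_{M ∈ SMLQ(γ)} q^{maj(M)} x^M`. -/
noncomputable def Gqsym (n : ℕ) (γ : List ℕ) : MvPolynomial ℕ (Polynomial ℤ) :=
  ∑ᶠ (rows : List (Finset ℕ))
    (_ : IsMLQ n (sortDesc γ) rows ∧ strtypeOf n rows = γ),
    MvPolynomial.C (qpow (maj n rows)) * xM n rows

/-- The quasisymmetric Schur polynomial `QS_τ(X) = Σ_{M ∈ SNMLQ(τ)} x^M`. -/
noncomputable def QSpoly (n : ℕ) (τ : List ℕ) : MvPolynomial ℕ (Polynomial ℤ) :=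
  ∑ᶠ (rows : List (Finset ℕ))
    (_ : IsMLQ n (sortDesc τ) rows ∧ maj n rows = 0 ∧ strtypeOf n rows = τ),
    xM n rows

/-- The nonsymmetric Kostka–Foulkes polynomial
`K_{α,β}(q) = Σ_Q q^{charge(Q)}`, the sum over the semistandard Young tableaux `Q`
of shape `sort(β)'` and content `sort(α)'` such that `type(ρ^{-1}(M_β, Q)) = α`,
the preimage being expressed via the collapsing bijection `ρ = (ρ_N, ρ_Q)`. -/
noncomputable def Kpoly (n : ℕ) (α β : ℕ → ℕ) : Polynomial ℤ :=
  ∑ᶠ (Q : List (List ℕ))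
    (_ : IsSSYT Q (conj (sortComp n β)) (conj (sortComp n α)) ∧
      ∃ rows : List (Finset ℕ), IsMLQ n (sortComp n α) rows ∧
        rhoN n rows = straight n β ∧ rhoQ n rows = Q ∧ typeOf n rows = α),
    qpow (tabCharge Q)

/-- The quasisymmetric Kostka–Foulkes polynomial
`K_{γ,τ}(q) = Σ_Q q^{charge(Q)}`, the sum over the semistandard Young tableaux `Q`
of shape `sort(τ)'` and content `sort(γ)'` such that `strtype(ρ^{-1}(M_τ, Q)) = γ`. -/
noncomputable def KpolyQ (n : ℕ) (γ τ : List ℕ) : Polynomial ℤ :=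
  ∑ᶠ (Q : List (List ℕ))
    (_ : IsSSYT Q (conj (sortDesc τ)) (conj (sortDesc γ)) ∧
      ∃ rows : List (Finset ℕ), IsMLQ n (sortDesc γ) rows ∧
        rhoN n rows = straight n (padComp n τ) ∧ rhoQ n rows = Q ∧
        strtypeOf n rows = γ),
    qpow (tabCharge Q)

/-! ### Auxiliary: greedy matching analysis -/

/-- The target of `c`: the minimum element of `A` that is `≥ c` (0 if none). -/
def tgtOf (A : Finset ℕ) (c : ℕ) : ℕ := ((A.filter (fun x => c ≤ x)).min).getD 0

/-- Mirror of the fold inside `pairsAt`. -/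
def greedyRun (A : Finset ℕ) : List ℕ → List (ℕ × ℕ)
  | [] => []
  | c :: cs =>
    match cycNext A c with
    | some t => (c, t) :: greedyRun (A.erase t) cs
    | none => greedyRun A cs

/-- Hall condition: every upper interval has enough available targets. -/
def HallL (l : List ℕ) (A : Finset ℕ) : Prop :=
  ∀ v : ℕ, (l.filter (fun x => v ≤ x)).length ≤ (A.filter (fun x => v ≤ x)).card

/-- Protection of `u`: strict counting inequality on all intervals `[v,u]`. -/
def ProtL (u : ℕ) (l : List ℕ) (A : Finset ℕ) : Prop :=
  ∀ v : ℕ, 1 ≤ v → v ≤ u →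
    (l.filter (fun x => v ≤ x ∧ x ≤ u)).length < (A.filter (fun x => v ≤ x ∧ x ≤ u)).card

lemma tgt_spec {A : Finset ℕ} {c : ℕ} (h : (A.filter (fun x => c ≤ x)).Nonempty) :
    tgtOf A c ∈ A ∧ c ≤ tgtOf A c ∧ ∀ x ∈ A, c ≤ x → tgtOf A c ≤ x := by
  obtain ⟨m, hm⟩ := Finset.min_of_nonempty h
  have hmm : m ∈ A.filter (fun x => c ≤ x) := Finset.mem_of_min hm
  have : tgtOf A c = m := by simp [tgtOf, hm]; rfl
  rw [this]
  refine ⟨(Finset.mem_filter.1 hmm).1, (Finset.mem_filter.1 hmm).2, ?_⟩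
  intro x hx hcx
  exact Finset.min_le_of_eq (Finset.mem_filter.2 ⟨hx, hcx⟩) hm

lemma cycNext_eq_tgt {A : Finset ℕ} {c : ℕ} (h : (A.filter (fun x => c ≤ x)).Nonempty) :
    cycNext A c = some (tgtOf A c) := by
  have : tgtOf A c = (A.filter (fun x => c ≤ x)).min' h := by
    rw [tgtOf, ← Finset.coe_min' h]; rfl
  rw [cycNext, dif_pos h, this]

lemma hall_head {c : ℕ} {cs : List ℕ} {A : Finset ℕ} (H : HallL (c :: cs) A) :
    (A.filter (fun x => c ≤ x)).Nonempty := by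
  have := H c
  rw [← Finset.card_pos]
  have h1 : c ∈ (c :: cs).filter (fun x => c ≤ x) := by simp
  have h2 : 0 < ((c :: cs).filter (fun x => c ≤ x)).length := List.length_pos_iff.2 (by intro he; rw [he] at h1; exact absurd h1 List.not_mem_nil)
  omega

lemma greedyRun_cons {c : ℕ} {cs : List ℕ} {A : Finset ℕ} (H : HallL (c :: cs) A) :
    greedyRun A (c :: cs) = (c, tgtOf A c) :: greedyRun (A.erase (tgtOf A c)) cs := by
  rw [greedyRun, cycNext_eq_tgt (hall_head H)]
lemma erase_filter_comm (A : Finset ℕ) (t : ℕ) (p : ℕ → Prop) [DecidablePred p] :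
    (A.erase t).filter p = (A.filter p).erase t := by
  ext x; simp only [Finset.mem_filter, Finset.mem_erase]; tauto

lemma filter_len_mono {l : List ℕ} {p q : ℕ → Bool} (h : ∀ a ∈ l, p a = true → q a = true) :
    (l.filter p).length ≤ (l.filter q).length := by
  simpa only [← List.countP_eq_length_filter] using List.countP_mono_left h

lemma hall_tail {c : ℕ} {cs : List ℕ} {A : Finset ℕ} (H : HallL (c :: cs) A) :
    HallL cs (A.erase (tgtOf A c)) := by
  obtain ⟨htA, hct, hmin⟩ := tgt_spec (hall_head H)
  set t := tgtOf A c with hT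
  intro v
  rcases le_or_gt v c with hv | hv
  · have hm : t ∈ A.filter (fun x => v ≤ x) := Finset.mem_filter.2 ⟨htA, le_trans hv hct⟩
    rw [erase_filter_comm, Finset.card_erase_of_mem hm]
    have := H v
    have hlist : ((c :: cs).filter (fun x => v ≤ x)).length
        = (cs.filter (fun x => v ≤ x)).length + 1 := by
      simp [List.filter_cons, hv]
    omega
  · rcases le_or_gt v t with hvt | hvt
    · have heq : A.filter (fun x => v ≤ x) = A.filter (fun x => c ≤ x) := by
        ext x
        simp only [Finset.mem_filter]
        constructor
        · rintro ⟨hx, hvx⟩; exact ⟨hx, le_trans hv.le hvx⟩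
        · rintro ⟨hx, hcx⟩; exact ⟨hx, le_trans hvt (hmin x hx hcx)⟩
      have hm : t ∈ A.filter (fun x => v ≤ x) := Finset.mem_filter.2 ⟨htA, hvt⟩
      rw [erase_filter_comm, Finset.card_erase_of_mem hm, heq]
      have h1 := H c
      have hlist : ((c :: cs).filter (fun x => c ≤ x)).length
          = (cs.filter (fun x => c ≤ x)).length + 1 := by
        simp [List.filter_cons]
      have h2 : (cs.filter (fun x => v ≤ x)).length ≤ (cs.filter (fun x => c ≤ x)).length :=
        filter_len_mono (by intro a _ ha; simp only [decide_eq_true_eq] at *; omega)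
      omega
    · have hm : t ∉ A.filter (fun x => v ≤ x) := by
        simp only [Finset.mem_filter]; rintro ⟨-, hvx⟩; omega
      rw [erase_filter_comm, Finset.erase_eq_of_notMem hm]
      have := H v
      have hlist : ((c :: cs).filter (fun x => v ≤ x)).length
          = (cs.filter (fun x => v ≤ x)).length := by
        simp only [List.filter_cons, decide_eq_true_eq]
        rw [if_neg (by omega)]
      omega

lemma prot_tail {u c : ℕ} {cs : List ℕ} {A : Finset ℕ} (H : HallL (c :: cs) A)
    (hc : 1 ≤ c) (P : ProtL u (c :: cs) A) :
    tgtOf A c ≠ u ∧ ProtL u cs (A.erase (tgtOf A c)) := by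
  obtain ⟨htA, hct, hmin⟩ := tgt_spec (hall_head H)
  set t := tgtOf A c with hT
  rcases le_or_gt c u with hcu | hcu
  · -- c ≤ u : the target is < u
    have hPc := P c hc hcu
    have hlist : ((c :: cs).filter (fun x => c ≤ x ∧ x ≤ u)).length
        = (cs.filter (fun x => c ≤ x ∧ x ≤ u)).length + 1 := by
      simp [List.filter_cons, hcu]
    have hcard2 : 2 ≤ (A.filter (fun x => c ≤ x ∧ x ≤ u)).card := by omega
    have htu : t < u := by
      by_contra hge
      push_neg at hge
      have hsub : A.filter (fun x => c ≤ x ∧ x ≤ u) ⊆ {u} := by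
        intro x hx
        simp only [Finset.mem_filter] at hx
        have := hmin x hx.1 hx.2.1
        simp only [Finset.mem_singleton]
        omega
      have := Finset.card_le_card hsub
      simp at this; omega
    refine ⟨by omega, ?_⟩
    intro v hv1 hvu
    rcases le_or_gt v c with hvc | hvc
    · have hm : t ∈ A.filter (fun x => v ≤ x ∧ x ≤ u) :=
        Finset.mem_filter.2 ⟨htA, by omega, by omega⟩
      rw [erase_filter_comm, Finset.card_erase_of_mem hm]
      have := P v hv1 hvu
      have hlist2 : ((c :: cs).filter (fun x => v ≤ x ∧ x ≤ u)).length
          = (cs.filter (fun x => v ≤ x ∧ x ≤ u)).length + 1 := by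
        simp only [List.filter_cons, decide_eq_true_eq]
        rw [if_pos (by omega)]
        rfl
      omega
    · rcases le_or_gt v t with hvt | hvt
      · have heq : A.filter (fun x => v ≤ x ∧ x ≤ u) = A.filter (fun x => c ≤ x ∧ x ≤ u) := by
          ext x
          simp only [Finset.mem_filter]
          constructor
          · rintro ⟨hx, h1, h2⟩; exact ⟨hx, by omega, h2⟩
          · rintro ⟨hx, h1, h2⟩; exact ⟨hx, le_trans hvt (hmin x hx h1), h2⟩
        have hm : t ∈ A.filter (fun x => v ≤ x ∧ x ≤ u) :=
          Finset.mem_filter.2 ⟨htA, by omega, by omega⟩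
        rw [erase_filter_comm, Finset.card_erase_of_mem hm, heq]
        have h2 : (cs.filter (fun x => v ≤ x ∧ x ≤ u)).length
            ≤ (cs.filter (fun x => c ≤ x ∧ x ≤ u)).length :=
          filter_len_mono (by intro a _ ha; simp only [decide_eq_true_eq] at *; omega)
        omega
      · have hm : t ∉ A.filter (fun x => v ≤ x ∧ x ≤ u) := by
          simp only [Finset.mem_filter]; rintro ⟨-, h1, -⟩; omega
        rw [erase_filter_comm, Finset.erase_eq_of_notMem hm]
        have := P v hv1 hvu
        have hlist2 : ((c :: cs).filter (fun x => v ≤ x ∧ x ≤ u)).length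
            = (cs.filter (fun x => v ≤ x ∧ x ≤ u)).length := by
          simp only [List.filter_cons, decide_eq_true_eq]
          rw [if_neg (by omega)]
        omega
  · -- u < c : nothing in [v,u] changes
    have htu : u < t := lt_of_lt_of_le hcu hct
    refine ⟨by omega, ?_⟩
    intro v hv1 hvu
    have hm : t ∉ A.filter (fun x => v ≤ x ∧ x ≤ u) := by
      simp only [Finset.mem_filter]; rintro ⟨-, -, h2⟩; omega
    rw [erase_filter_comm, Finset.erase_eq_of_notMem hm]
    have := P v hv1 hvu
    have hlist2 : ((c :: cs).filter (fun x => v ≤ x ∧ x ≤ u)).length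
        = (cs.filter (fun x => v ≤ x ∧ x ≤ u)).length := by
      simp only [List.filter_cons, decide_eq_true_eq]
      rw [if_neg (by omega)]
    omega
lemma hall_prefix {p q : List ℕ} {A : Finset ℕ} (H : HallL (p ++ q) A) : HallL p A := by
  intro v
  refine le_trans ?_ (H v)
  rw [List.filter_append, List.length_append]
  omega

lemma prot_prefix {u : ℕ} {p q : List ℕ} {A : Finset ℕ} (P : ProtL u (p ++ q) A) :
    ProtL u p A := by
  intro v hv1 hvu
  refine lt_of_le_of_lt ?_ (P v hv1 hvu)
  rw [List.filter_append, List.length_append]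
  omega

lemma greedy_fst {ord : List ℕ} : ∀ {A : Finset ℕ}, HallL ord A →
    (greedyRun A ord).map Prod.fst = ord := by
  induction ord with
  | nil => intro A _; rfl
  | cons c cs ih =>
    intro A H
    rw [greedyRun_cons H, List.map_cons, ih (hall_tail H)]

lemma greedy_pairs {ord : List ℕ} : ∀ {A : Finset ℕ}, HallL ord A →
    ∀ p ∈ greedyRun A ord, p.1 ≤ p.2 ∧ p.2 ∈ A := by
  induction ord with
  | nil => intro A _ p hp; simp [greedyRun] at hp
  | cons c cs ih =>
    intro A H p hp
    rw [greedyRun_cons H] at hp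
    obtain ⟨htA, hct, -⟩ := tgt_spec (hall_head H)
    rcases List.mem_cons.1 hp with rfl | hp
    · exact ⟨hct, htA⟩
    · obtain ⟨h1, h2⟩ := ih (hall_tail H) p hp
      exact ⟨h1, Finset.mem_of_mem_erase h2⟩

lemma greedy_tgt_nodup {ord : List ℕ} : ∀ {A : Finset ℕ}, HallL ord A →
    ((greedyRun A ord).map Prod.snd).Nodup := by
  induction ord with
  | nil => intro A _; simp [greedyRun]
  | cons c cs ih =>
    intro A H
    rw [greedyRun_cons H, List.map_cons]
    refine List.nodup_cons.2 ⟨?_, ih (hall_tail H)⟩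
    intro hmem
    obtain ⟨p, hp, hps⟩ := List.mem_map.1 hmem
    have := (greedy_pairs (hall_tail H) p hp).2
    rw [hps] at this
    exact (Finset.notMem_erase _ _) this

lemma greedy_order {ord : List ℕ} : ∀ {A : Finset ℕ}, HallL ord A →
    ∀ c t c' t', List.Sublist [(c, t), (c', t')] (greedyRun A ord) → c < c' → t < t' := by
  induction ord with
  | nil => intro A _ c t c' t' hsub; rw [greedyRun] at hsub; simp at hsub
  | cons a as ih =>
    intro A H c t c' t' hsub hcc
    rw [greedyRun_cons H] at hsub
    obtain ⟨htA, hat, hmin⟩ := tgt_spec (hall_head H)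
    cases hsub with
    | cons _ hsub => exact ih (hall_tail H) c t c' t' hsub hcc
    | cons_cons _ hsub =>
      have hmem : (c', t') ∈ greedyRun (A.erase (tgtOf A a)) as := hsub.subset (by simp)
      obtain ⟨h1, h2⟩ := greedy_pairs (hall_tail H) _ hmem
      have ht'A : t' ∈ A := Finset.mem_of_mem_erase h2
      have ht'ne : t' ≠ tgtOf A a := Finset.ne_of_mem_erase h2
      have : tgtOf A a ≤ t' := hmin t' ht'A (by omega)
      omega

lemma erase_sdiff_eq (A : Finset ℕ) (t : ℕ) (S : Finset ℕ) :
    (A.erase t) \ S = A \ (insert t S) := by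
  ext x
  simp only [Finset.mem_sdiff, Finset.mem_erase, Finset.mem_insert]
  tauto

lemma greedy_append {p q : List ℕ} : ∀ {A : Finset ℕ}, HallL (p ++ q) A →
    greedyRun A (p ++ q)
      = greedyRun A p ++ greedyRun (A \ ((greedyRun A p).map Prod.snd).toFinset) q := by
  induction p with
  | nil => intro A H; simp [greedyRun]
  | cons c cs ih =>
    intro A H
    rw [List.cons_append] at H ⊢
    rw [greedyRun_cons H, greedyRun_cons (hall_prefix (by rw [List.cons_append]; exact H) :
        HallL (c :: cs) A), ih (hall_tail H), List.cons_append]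
    congr 2
    rw [List.map_cons, List.toFinset_cons, ← erase_sdiff_eq]

lemma greedy_prot {ord : List ℕ} : ∀ {A : Finset ℕ} {u : ℕ}, HallL ord A →
    (∀ x ∈ ord, 1 ≤ x) → ProtL u ord A →
    u ∉ (greedyRun A ord).map Prod.snd := by
  induction ord with
  | nil => intro A u _ _ _; simp [greedyRun]
  | cons c cs ih =>
    intro A u H h1 P
    obtain ⟨hne, hP⟩ := prot_tail H (h1 c (by simp)) P
    rw [greedyRun_cons H, List.map_cons]
    intro hmem
    rcases List.mem_cons.1 hmem with h | h
    · exact hne h.symm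
    · exact ih (hall_tail H) (fun x hx => h1 x (by simp [hx])) hP h
/-! ### Analysis of the scan -/

def scanStep (a b : Finset ℕ) (st : List ℕ × Finset ℕ × Finset ℕ × List ℕ) (j : ℕ) :
    List ℕ × Finset ℕ × Finset ℕ × List ℕ :=
  let stk : List ℕ := if j ∈ b then j :: st.1 else st.1
  if j ∈ a then
    match stk with
    | [] => ([], st.2.1, st.2.2.1, st.2.2.2 ++ [j])
    | x :: rest => (rest, insert x st.2.1, insert j st.2.2.1, st.2.2.2)
  else (stk, st.2.1, st.2.2.1, st.2.2.2)

lemma scan_eq_foldl (n : ℕ) (a b : Finset ℕ) :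
    scan n a b = (colsList n).foldl (scanStep a b) ([], ∅, ∅, []) := rfl

lemma colsList_succ (n : ℕ) : colsList (n + 1) = colsList n ++ [n + 1] := by
  simp [colsList, List.range_succ]

lemma mem_colsList {n c : ℕ} : c ∈ colsList n ↔ 1 ≤ c ∧ c ≤ n := by
  simp only [colsList, List.mem_map, List.mem_range]
  constructor
  · rintro ⟨x, hx, rfl⟩; omega
  · rintro ⟨h1, h2⟩; exact ⟨c - 1, by omega, by omega⟩

lemma scan_succ (n : ℕ) (a b : Finset ℕ) :
    scan (n + 1) a b = scanStep a b (scan n a b) (n + 1) := by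
  rw [scan_eq_foldl, scan_eq_foldl, colsList_succ, List.foldl_append]
  rfl

lemma scanStep_both {j : ℕ} {a b : Finset ℕ} (ha : j ∈ a) (hb : j ∈ b)
    (stk : List ℕ) (mt mb : Finset ℕ) (un : List ℕ) :
    scanStep a b (stk, mt, mb, un) j = (stk, insert j mt, insert j mb, un) := by
  simp [scanStep, ha, hb]

lemma scanStep_push {j : ℕ} {a b : Finset ℕ} (ha : j ∉ a) (hb : j ∈ b)
    (stk : List ℕ) (mt mb : Finset ℕ) (un : List ℕ) :
    scanStep a b (stk, mt, mb, un) j = (j :: stk, mt, mb, un) := by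
  simp [scanStep, ha, hb]

lemma scanStep_popx {j : ℕ} {a b : Finset ℕ} (ha : j ∈ a) (hb : j ∉ b)
    (x : ℕ) (stk : List ℕ) (mt mb : Finset ℕ) (un : List ℕ) :
    scanStep a b (x :: stk, mt, mb, un) j = (stk, insert x mt, insert j mb, un) := by
  simp [scanStep, ha, hb]

lemma scanStep_unm {j : ℕ} {a b : Finset ℕ} (ha : j ∈ a) (hb : j ∉ b)
    (mt mb : Finset ℕ) (un : List ℕ) :
    scanStep a b ([], mt, mb, un) j = ([], mt, mb, un ++ [j]) := by
  simp [scanStep, ha, hb]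

lemma scanStep_none {j : ℕ} {a b : Finset ℕ} (ha : j ∉ a) (hb : j ∉ b)
    (stk : List ℕ) (mt mb : Finset ℕ) (un : List ℕ) :
    scanStep a b (stk, mt, mb, un) j = (stk, mt, mb, un) := by
  simp [scanStep, ha, hb]

/-- Restriction of a finset to `{1,…,n}`. -/
def F1 (n : ℕ) (s : Finset ℕ) : Finset ℕ := s.filter (fun x => 1 ≤ x ∧ x ≤ n)

lemma F1_succ_mem {n : ℕ} {s : Finset ℕ} (h : (n + 1) ∈ s) :
    F1 (n + 1) s = insert (n + 1) (F1 n s) := by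
  ext x
  simp only [F1, Finset.mem_filter, Finset.mem_insert]
  constructor
  · rintro ⟨hx, h1, h2⟩
    rcases Nat.lt_or_ge x (n+1) with h3 | h3
    · exact Or.inr ⟨hx, h1, by omega⟩
    · exact Or.inl (by omega)
  · rintro (rfl | ⟨hx, h1, h2⟩)
    · exact ⟨h, by omega, le_refl _⟩
    · exact ⟨hx, h1, by omega⟩

lemma F1_succ_not {n : ℕ} {s : Finset ℕ} (h : (n + 1) ∉ s) :
    F1 (n + 1) s = F1 n s := by
  ext x
  simp only [F1, Finset.mem_filter]
  constructor
  · rintro ⟨hx, h1, h2⟩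
    refine ⟨hx, h1, ?_⟩
    rcases Nat.lt_or_ge x (n+1) with h3 | h3
    · omega
    · exfalso; have : x = n + 1 := by omega
      exact h (this ▸ hx)
  · rintro ⟨hx, h1, h2⟩; exact ⟨hx, h1, by omega⟩

lemma not_mem_F1 {n : ℕ} {s : Finset ℕ} : (n + 1) ∉ F1 n s := by
  simp only [F1, Finset.mem_filter, not_and]
  intro _ _ h; omega

/-- The full invariant of the scan. -/
structure ScanOK (n : ℕ) (a b : Finset ℕ) : Prop where
  stk_sub : ∀ x ∈ (scan n a b).1, x ∈ b ∧ 1 ≤ x ∧ x ≤ n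
  stk_nodup : (scan n a b).1.Nodup
  mt_union : (scan n a b).1.toFinset ∪ (scan n a b).2.1 = F1 n b
  mt_disj : ∀ x ∈ (scan n a b).1, x ∉ (scan n a b).2.1
  mb_union : (scan n a b).2.2.1 ∪ (scan n a b).2.2.2.toFinset = F1 n a
  mb_disj : ∀ x ∈ (scan n a b).2.2.2, x ∉ (scan n a b).2.2.1
  un_nodup : (scan n a b).2.2.2.Nodup
  card_eq : (scan n a b).2.1.card = (scan n a b).2.2.1.card
  ci : ∀ v, ((scan n a b).2.1.filter (fun x => v ≤ x)).card
      ≤ ((scan n a b).2.2.1.filter (fun x => v ≤ x)).card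
  prot : ∀ u ∈ (scan n a b).2.2.2, ∀ v, 1 ≤ v → v ≤ u →
      (b.filter (fun x => v ≤ x ∧ x ≤ u)).card < (a.filter (fun x => v ≤ x ∧ x ≤ u)).card
lemma F1_zero (s : Finset ℕ) : F1 0 s = ∅ := by
  ext x
  simp only [F1, Finset.mem_filter, Finset.notMem_empty, iff_false, not_and]
  intro _ h1 h2; omega

lemma mem_F1 {n x : ℕ} {s : Finset ℕ} : x ∈ F1 n s ↔ x ∈ s ∧ 1 ≤ x ∧ x ≤ n := by
  simp [F1]

lemma scanOK : ∀ (n : ℕ) (a b : Finset ℕ), ScanOK n a b := by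
  intro n
  induction n with
  | zero =>
    intro a b
    have h0 : scan 0 a b = ([], ∅, ∅, []) := rfl
    refine ⟨?_, ?_, ?_, ?_, ?_, ?_, ?_, ?_, ?_, ?_⟩ <;>
      simp [h0, F1_zero]
  | succ n IH =>
    intro a b
    obtain ⟨S1, S2, S3, S4, S5, S6, S7, S8, S9, S10⟩ := IH a b
    rcases hst : scan n a b with ⟨stk, rest'⟩
    rcases rest' with ⟨mt, rest''⟩
    rcases rest'' with ⟨mb, un⟩
    rw [hst] at S1 S2 S3 S4 S5 S6 S7 S8 S9 S10
    simp only at S1 S2 S3 S4 S5 S6 S7 S8 S9 S10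
    have hsucc : scan (n + 1) a b = scanStep a b (stk, mt, mb, un) (n + 1) := by
      rw [scan_succ, hst]
    have hmt_le : ∀ x ∈ mt, x ∈ b ∧ 1 ≤ x ∧ x ≤ n := by
      intro x hx
      have : x ∈ F1 n b := S3 ▸ Finset.mem_union_right _ hx
      exact mem_F1.1 this
    have hmb_le : ∀ x ∈ mb, x ∈ a ∧ 1 ≤ x ∧ x ≤ n := by
      intro x hx
      have : x ∈ F1 n a := S5 ▸ Finset.mem_union_left _ hx
      exact mem_F1.1 this
    have hun_le : ∀ x ∈ un, x ∈ a ∧ 1 ≤ x ∧ x ≤ n := by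
      intro x hx
      have : x ∈ F1 n a := S5 ▸ Finset.mem_union_right _ (List.mem_toFinset.2 hx)
      exact mem_F1.1 this
    have hjmt : (n + 1) ∉ mt := fun h => by have := hmt_le _ h; omega
    have hjmb : (n + 1) ∉ mb := fun h => by have := hmb_le _ h; omega
    have hjun : (n + 1) ∉ un := fun h => by have := hun_le _ h; omega
    have hjstk : (n + 1) ∉ stk := fun h => by have := S1 _ h; omega
    by_cases hb : (n + 1) ∈ b <;> by_cases ha : (n + 1) ∈ a
    · -- both: push then pop itself
      rw [scanStep_both ha hb] at hsucc
      refine ⟨?_, ?_, ?_, ?_, ?_, ?_, ?_, ?_, ?_, ?_⟩ <;> rw [hsucc]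
      · intro x hx; have := S1 x hx; exact ⟨this.1, this.2.1, by omega⟩
      · exact S2
      · simp only
        rw [Finset.union_insert, S3, ← F1_succ_mem hb]
      · intro x hx
        simp only [Finset.mem_insert]
        push_neg
        exact ⟨fun h => hjstk (h ▸ hx), S4 x hx⟩
      · simp only
        rw [Finset.insert_union, S5, ← F1_succ_mem ha]
      · intro x hx
        simp only [Finset.mem_insert]
        push_neg
        exact ⟨fun h => hjun (h ▸ hx), S6 x hx⟩
      · exact S7
      · simp only
        rw [Finset.card_insert_of_notMem hjmt, Finset.card_insert_of_notMem hjmb, S8]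
      · intro v
        simp only [Finset.filter_insert]
        by_cases hv : v ≤ n + 1
        · rw [if_pos hv, if_pos hv,
            Finset.card_insert_of_notMem (fun h => hjmt (Finset.mem_of_mem_filter _ h)),
            Finset.card_insert_of_notMem (fun h => hjmb (Finset.mem_of_mem_filter _ h))]
          exact Nat.add_le_add_right (S9 v) 1
        · rw [if_neg hv, if_neg hv]; exact S9 v
      · exact S10
    · -- push only
      rw [scanStep_push ha hb] at hsucc
      refine ⟨?_, ?_, ?_, ?_, ?_, ?_, ?_, ?_, ?_, ?_⟩ <;> rw [hsucc]
      · intro x hx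
        rcases List.mem_cons.1 hx with rfl | hx
        · exact ⟨hb, by omega, le_refl _⟩
        · have := S1 x hx; exact ⟨this.1, this.2.1, by omega⟩
      · exact List.nodup_cons.2 ⟨hjstk, S2⟩
      · simp only [List.toFinset_cons]
        rw [Finset.insert_union, S3, ← F1_succ_mem hb]
      · intro x hx
        rcases List.mem_cons.1 hx with rfl | hx
        · exact hjmt
        · exact S4 x hx
      · simp only
        rw [S5, F1_succ_not ha]
      · exact S6
      · exact S7
      · exact S8
      · exact S9
      · exact S10
    · -- pop (no push)
      rcases stk with _ | ⟨x, rest⟩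
      · -- unmatched bottom element
        rw [scanStep_unm ha hb] at hsucc
        refine ⟨?_, ?_, ?_, ?_, ?_, ?_, ?_, ?_, ?_, ?_⟩ <;> rw [hsucc]
        · intro x hx; simp at hx
        · simp
        · simp only
          rw [S3, F1_succ_not hb]
        · intro x hx; simp at hx
        · simp only [List.toFinset_append, List.toFinset_cons, List.toFinset_nil]
          rw [← Finset.union_assoc, S5, F1_succ_mem ha]
          ext y
          simp only [Finset.mem_union, Finset.mem_insert, Finset.notMem_empty, or_false]
          tauto
        · intro x hx
          rcases List.mem_append.1 hx with hx | hx
          · exact S6 x hx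
          · simp at hx; subst hx; exact hjmb
        · refine List.Nodup.append S7 (by simp) ?_
          intro x hx hy
          simp at hy; subst hy; exact hjun hx
        · exact S8
        · exact S9
        · intro u hu v hv1 hvu
          rcases List.mem_append.1 hu with hu | hu
          · exact S10 u hu v hv1 hvu
          · simp only [List.mem_singleton] at hu
            subst hu
            -- the key counting estimate
            have hbeq : b.filter (fun x => v ≤ x ∧ x ≤ n + 1)
                = mt.filter (fun x => v ≤ x) := by
              have hFb : F1 n b = mt := by rw [← S3]; simp
              ext y
              simp only [Finset.mem_filter]
              constructor
              · rintro ⟨hy, h1, h2⟩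
                have hyn : y ≤ n := by
                  rcases Nat.lt_or_ge y (n+1) with h3 | h3
                  · omega
                  · exfalso; have : y = n + 1 := by omega
                    exact hb (this ▸ hy)
                have : y ∈ F1 n b := mem_F1.2 ⟨hy, by omega, hyn⟩
                rw [hFb] at this
                exact ⟨this, h1⟩
              · rintro ⟨hy, h1⟩
                have : y ∈ F1 n b := hFb ▸ hy
                have := mem_F1.1 this
                exact ⟨this.1, h1, by omega⟩
            have hsub2 : insert (n + 1) (mb.filter (fun x => v ≤ x))
                ⊆ a.filter (fun x => v ≤ x ∧ x ≤ n + 1) := by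
              intro y hy
              rcases Finset.mem_insert.1 hy with rfl | hy
              · exact Finset.mem_filter.2 ⟨ha, hvu, le_refl _⟩
              · obtain ⟨hy1, hy2⟩ := Finset.mem_filter.1 hy
                have := hmb_le _ hy1
                exact Finset.mem_filter.2 ⟨this.1, hy2, by omega⟩
            have hcard2 := Finset.card_le_card hsub2
            rw [Finset.card_insert_of_notMem
              (fun h => hjmb (Finset.mem_of_mem_filter _ h))] at hcard2
            have := S9 v
            rw [hbeq]
            omega
      · -- pop x
        rw [scanStep_popx ha hb] at hsucc
        have hxstk := S1 x (by simp)
        have hxmt : x ∉ mt := S4 x (by simp)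
        refine ⟨?_, ?_, ?_, ?_, ?_, ?_, ?_, ?_, ?_, ?_⟩ <;> rw [hsucc]
        · intro y hy
          have := S1 y (by simp [hy])
          exact ⟨this.1, this.2.1, by omega⟩
        · exact (List.nodup_cons.1 S2).2
        · simp only
          have : rest.toFinset ∪ insert x mt = (x :: rest).toFinset ∪ mt := by
            simp only [List.toFinset_cons]
            rw [Finset.union_insert, Finset.insert_union]
          rw [this, S3, F1_succ_not hb]
        · intro y hy
          simp only [Finset.mem_insert]
          push_neg
          have hynd := List.nodup_cons.1 S2
          exact ⟨fun h => hynd.1 (h ▸ hy), S4 y (by simp [hy])⟩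
        · simp only
          rw [Finset.insert_union, S5, ← F1_succ_mem ha]
        · intro y hy
          simp only [Finset.mem_insert]
          push_neg
          exact ⟨fun h => hjun (h ▸ hy), S6 y hy⟩
        · exact S7
        · simp only
          rw [Finset.card_insert_of_notMem hxmt, Finset.card_insert_of_notMem hjmb, S8]
        · intro v
          simp only [Finset.filter_insert]
          by_cases hvx : v ≤ x
          · rw [if_pos hvx, if_pos (by omega : v ≤ n + 1),
              Finset.card_insert_of_notMem (fun h => hxmt (Finset.mem_of_mem_filter _ h)),
              Finset.card_insert_of_notMem (fun h => hjmb (Finset.mem_of_mem_filter _ h))]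
            exact Nat.add_le_add_right (S9 v) 1
          · rw [if_neg hvx]
            by_cases hv : v ≤ n + 1
            · rw [if_pos hv,
                Finset.card_insert_of_notMem (fun h => hjmb (Finset.mem_of_mem_filter _ h))]
              exact le_trans (S9 v) (by omega)
            · rw [if_neg hv]; exact S9 v
        · exact S10
    · -- nothing happens
      rw [scanStep_none ha hb] at hsucc
      refine ⟨?_, ?_, ?_, ?_, ?_, ?_, ?_, ?_, ?_, ?_⟩ <;> rw [hsucc]
      · intro x hx; have := S1 x hx; exact ⟨this.1, this.2.1, by omega⟩
      · exact S2
      · simp only; rw [S3, F1_succ_not hb]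
      · exact S4
      · simp only; rw [S5, F1_succ_not ha]
      · exact S6
      · exact S7
      · exact S8
      · exact S9
      · exact S10
lemma nodup_filter_length {l : List ℕ} (ho : l.Nodup) (p : ℕ → Prop) [DecidablePred p] :
    (l.filter (fun x => decide (p x))).length = (l.toFinset.filter p).card := by
  rw [← List.toFinset_card_of_nodup (ho.filter _)]
  congr 1
  ext x
  simp

lemma theta_card_eq (n : ℕ) (a b : Finset ℕ) :
    (theta n a b).card = (matchedTop n a b).card := ((scanOK n a b).card_eq).symm

lemma theta_card_le (n : ℕ) (a b : Finset ℕ) (hb : b ⊆ Finset.Icc 1 n) :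
    (theta n a b).card ≤ b.card := by
  rw [theta_card_eq]
  apply Finset.card_le_card
  intro x hx
  have : x ∈ F1 n b := (scanOK n a b).mt_union ▸ Finset.mem_union_right _ hx
  exact (mem_F1.1 this).1

lemma theta_sub (n : ℕ) (a b : Finset ℕ) : theta n a b ⊆ a := by
  intro x hx
  have : x ∈ F1 n a := (scanOK n a b).mb_union ▸ Finset.mem_union_left _ hx
  exact (mem_F1.1 this).1

lemma F1_of_sub {n : ℕ} {s : Finset ℕ} (h : s ⊆ Finset.Icc 1 n) : F1 n s = s := by
  ext x
  rw [mem_F1]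
  constructor
  · exact fun h => h.1
  · intro hx
    have := h hx
    rw [Finset.mem_Icc] at this
    exact ⟨hx, this⟩

/-- All consequences of full classical matching. -/
lemma full_consequences {n : ℕ} {a b : Finset ℕ} (hb : b ⊆ Finset.Icc 1 n)
    (hfull : (theta n a b).card = b.card) :
    matchedTop n a b = b ∧ (scan n a b).1 = [] ∧ Rcyl n a b = theta n a b := by
  obtain ⟨S1, S2, S3, S4, S5, S6, S7, S8, S9, S10⟩ := scanOK n a b
  have hmtb : matchedTop n a b ⊆ b := by
    intro x hx
    have : x ∈ F1 n b := S3 ▸ Finset.mem_union_right _ hx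
    exact (mem_F1.1 this).1
  have hcards : (matchedTop n a b).card = b.card := by
    rw [← theta_card_eq]; exact hfull
  have hmt : matchedTop n a b = b :=
    Finset.eq_of_subset_of_card_le hmtb (le_of_eq hcards.symm)
  have hstk : (scan n a b).1 = [] := by
    cases hs : (scan n a b).1 with
    | nil => rfl
    | cons x rest =>
      exfalso
      have hxmem : x ∈ (scan n a b).1.toFinset := by rw [hs]; simp
      have : x ∈ F1 n b := S3 ▸ Finset.mem_union_left _ hxmem
      have hxb : x ∈ b := (mem_F1.1 this).1
      rw [← hmt] at hxb
      exact S4 x (by rw [hs]; simp) hxb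
  refine ⟨hmt, hstk, ?_⟩
  rw [Rcyl, hstk]
  simp [theta]

lemma hall_of_full {n : ℕ} {a b : Finset ℕ} (hb : b ⊆ Finset.Icc 1 n)
    (hfull : (theta n a b).card = b.card) {ord : List ℕ} (ho : ord.Nodup)
    (hos : ord.toFinset = b) : HallL ord a := by
  obtain ⟨S1, S2, S3, S4, S5, S6, S7, S8, S9, S10⟩ := scanOK n a b
  obtain ⟨hmt, hstk, -⟩ := full_consequences hb hfull
  intro v
  have h1 : (ord.filter (fun x => v ≤ x)).length = (b.filter (fun x => v ≤ x)).card := by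
    rw [← hos]
    exact nodup_filter_length ho _
  have h2 : b.filter (fun x => v ≤ x) = (matchedTop n a b).filter (fun x => v ≤ x) := by
    rw [hmt]
  have h3 := S9 v
  have h4 : ((theta n a b).filter (fun x => v ≤ x)).card
      ≤ (a.filter (fun x => v ≤ x)).card :=
    Finset.card_le_card (Finset.filter_subset_filter _ (theta_sub n a b))
  rw [h1, h2]
  exact le_trans h3 h4

lemma prot_of_unmatched {n : ℕ} {a b : Finset ℕ} {u : ℕ} (hua : u ∈ a)
    (hun : 1 ≤ u) (hun2 : u ≤ n) (huth : u ∉ theta n a b) {ord : List ℕ}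
    (ho : ord.Nodup) (hos : ord.toFinset = b) : ProtL u ord a := by
  obtain ⟨S1, S2, S3, S4, S5, S6, S7, S8, S9, S10⟩ := scanOK n a b
  have humem : u ∈ (scan n a b).2.2.2 := by
    have : u ∈ F1 n a := mem_F1.2 ⟨hua, hun, hun2⟩
    rw [← S5] at this
    rcases Finset.mem_union.1 this with h | h
    · exact absurd h huth
    · exact List.mem_toFinset.1 h
  intro v hv1 hvu
  have h1 : (ord.filter (fun x => v ≤ x ∧ x ≤ u)).length
      = (b.filter (fun x => v ≤ x ∧ x ≤ u)).card := by
    rw [← hos]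
    exact nodup_filter_length ho _
  rw [h1]
  exact S10 u humem v hv1 hvu

/-- The bridge: greedy targets coincide with the classically matched set. -/
theorem bridge {n : ℕ} {a b : Finset ℕ} (ha : a ⊆ Finset.Icc 1 n)
    (hb : b ⊆ Finset.Icc 1 n) {ord : List ℕ} (ho : ord.Nodup)
    (hos : ord.toFinset = b) (hfull : (theta n a b).card = b.card) :
    ((greedyRun a ord).map Prod.snd).toFinset = theta n a b := by
  have H : HallL ord a := hall_of_full hb hfull ho hos
  have hord1 : ∀ x ∈ ord, 1 ≤ x := by
    intro x hx
    have : x ∈ b := hos ▸ List.mem_toFinset.2 hx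
    have := hb this
    rw [Finset.mem_Icc] at this
    exact this.1
  have hsub : ((greedyRun a ord).map Prod.snd).toFinset ⊆ theta n a b := by
    intro t ht
    rw [List.mem_toFinset] at ht
    obtain ⟨p, hp, hps⟩ := List.mem_map.1 ht
    have hta : t ∈ a := hps ▸ (greedy_pairs H p hp).2
    by_contra hth
    have h1t : 1 ≤ t ∧ t ≤ n := by
      have := ha hta
      rw [Finset.mem_Icc] at this
      exact this
    exact greedy_prot H hord1 (prot_of_unmatched hta h1t.1 h1t.2 hth ho hos) ht
  have hlen : ((greedyRun a ord).map Prod.snd).toFinset.card = b.card := by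
    rw [List.toFinset_card_of_nodup (greedy_tgt_nodup H), List.length_map, ← hos]
    have : (greedyRun a ord).length = ord.length := by
      have := greedy_fst H
      calc (greedyRun a ord).length = ((greedyRun a ord).map Prod.fst).length := by simp
      _ = ord.length := by rw [this]
    rw [this, List.toFinset_card_of_nodup ho]
  have : (theta n a b).card ≤ ((greedyRun a ord).map Prod.snd).toFinset.card := by
    rw [hlen, ← hfull]
  exact Finset.eq_of_subset_of_card_le hsub this
/-! ### sortKeyDesc lemmas -/

lemma insKey_decomp (key : ℕ → ℕ) (x : ℕ) :
    ∀ l : List ℕ, ∃ l1 l2, l = l1 ++ l2 ∧ insKey key x l = l1 ++ x :: l2 ∧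
      ∀ y ∈ l1, key x < key y := by
  intro l
  induction l with
  | nil => exact ⟨[], [], rfl, rfl, by simp⟩
  | cons y ys ih =>
    by_cases h : key y ≤ key x
    · exact ⟨[], y :: ys, rfl, by simp [insKey, h], by simp⟩
    · obtain ⟨l1, l2, he, hi, hk⟩ := ih
      refine ⟨y :: l1, l2, by simp [he], by simp [insKey, h, hi], ?_⟩
      intro z hz
      rcases List.mem_cons.1 hz with rfl | hz
      · omega
      · exact hk z hz

lemma insKey_perm (key : ℕ → ℕ) (x : ℕ) (l : List ℕ) :
    List.Perm (insKey key x l) (x :: l) := by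
  obtain ⟨l1, l2, he, hi, -⟩ := insKey_decomp key x l
  rw [hi, he]
  exact List.perm_middle

lemma sortKeyDesc_perm (key : ℕ → ℕ) (l : List ℕ) :
    List.Perm (sortKeyDesc key l) l := by
  induction l with
  | nil => rfl
  | cons x xs ih =>
    rw [sortKeyDesc]
    exact (insKey_perm key x _).trans (List.Perm.cons x ih)

lemma insKey_sorted (key : ℕ → ℕ) (x : ℕ) {l : List ℕ}
    (hs : l.Pairwise (fun a b => key b ≤ key a)) :
    (insKey key x l).Pairwise (fun a b => key b ≤ key a) := by
  induction l with
  | nil => simp [insKey]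
  | cons y ys ih =>
    rw [List.pairwise_cons] at hs
    by_cases h : key y ≤ key x
    · rw [insKey, if_pos h]
      refine List.pairwise_cons.2 ⟨?_, List.pairwise_cons.2 ⟨hs.1, hs.2⟩⟩
      intro z hz
      rcases List.mem_cons.1 hz with rfl | hz
      · exact h
      · exact le_trans (hs.1 z hz) h
    · rw [insKey, if_neg h]
      refine List.pairwise_cons.2 ⟨?_, ih hs.2⟩
      intro z hz
      have : z ∈ x :: ys := (insKey_perm key x ys).subset hz
      rcases List.mem_cons.1 this with rfl | hz2
      · omega
      · exact hs.1 z hz2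

lemma sortKeyDesc_sorted (key : ℕ → ℕ) (l : List ℕ) :
    (sortKeyDesc key l).Pairwise (fun a b => key b ≤ key a) := by
  induction l with
  | nil => simp [sortKeyDesc]
  | cons x xs ih => exact insKey_sorted key x ih

lemma sublist_of_key_lt {key : ℕ → ℕ} {x y : ℕ} :
    ∀ {l : List ℕ}, l.Pairwise (fun a b => key b ≤ key a) → x ∈ l → y ∈ l →
      key y < key x → List.Sublist [x, y] l := by
  intro l
  induction l with
  | nil => intro _ hx; simp at hx
  | cons a as ih =>
    intro hs hx hy hk
    rw [List.pairwise_cons] at hs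
    rcases List.mem_cons.1 hx with rfl | hx2
    · have hy' : y ∈ as := by
        rcases List.mem_cons.1 hy with rfl | hy'
        · omega
        · exact hy'
      exact (List.singleton_sublist.2 hy').cons₂ x
    · have hy' : y ∈ as := by
        rcases List.mem_cons.1 hy with heq | hy'
        · exfalso; have := hs.1 x hx2; rw [heq] at hk; omega
        · exact hy'
      exact (ih hs.2 hx2 hy' hk).cons a

lemma sortKeyDesc_stable {key : ℕ → ℕ} {x y : ℕ} (hk : key x = key y) :
    ∀ {l : List ℕ}, List.Sublist [x, y] l → List.Sublist [x, y] (sortKeyDesc key l) := by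
  intro l
  induction l with
  | nil => intro h; simp at h
  | cons z zs ih =>
    intro hsub
    rw [sortKeyDesc]
    obtain ⟨l1, l2, he, hi, hgt⟩ := insKey_decomp key z (sortKeyDesc key zs)
    cases hsub with
    | cons _ hsub =>
      rw [hi]
      have h1 : List.Sublist [x, y] (l1 ++ l2) := he ▸ ih hsub
      have h2 : List.Sublist (l1 ++ l2) (l1 ++ z :: l2) :=
        List.Sublist.append_left (List.sublist_cons_self z l2) l1
      exact h1.trans h2
    | cons_cons _ hsub =>
      -- x = z, [y] <+ zs
      rw [hi]
      have hymem : y ∈ sortKeyDesc key zs := (sortKeyDesc_perm key zs).mem_iff.2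
        (List.singleton_sublist.1 hsub)
      have hynl1 : y ∉ l1 := by
        intro hy
        have := hgt y hy
        omega
      have hyl2 : y ∈ l2 := by
        rw [he] at hymem
        rcases List.mem_append.1 hymem with h | h
        · exact absurd h hynl1
        · exact h
      have h1 : List.Sublist [x, y] (x :: l2) := (List.singleton_sublist.2 hyl2).cons₂ x
      have h2 : List.Sublist (x :: l2) (l1 ++ x :: l2) := List.sublist_append_right l1 _
      exact h1.trans h2

/-! ### pairsAt as greedyRun -/

lemma foldl_greedy : ∀ (l : List ℕ) (A : Finset ℕ) (acc : List (ℕ × ℕ)),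
    (l.foldl (fun (st : Finset ℕ × List (ℕ × ℕ)) c =>
      match cycNext st.1 c with
      | some t => (st.1.erase t, st.2 ++ [(c, t)])
      | none => st) (A, acc)).2 = acc ++ greedyRun A l := by
  intro l
  induction l with
  | nil => intro A acc; simp [greedyRun]
  | cons c cs ih =>
    intro A acc
    rw [List.foldl_cons, greedyRun]
    cases h : cycNext A c with
    | none => simp only [h]; exact ih A acc
    | some t =>
      simp only [h]
      rw [ih (A.erase t) (acc ++ [(c, t)])]
      simp

/-- The order list used by `pairsAt`. -/
def ordAt (n : ℕ) (rows : List (Finset ℕ)) (r : ℕ) : List ℕ :=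
  sortKeyDesc (fun c => labelAt n rows (r + 1) c)
    ((colsList n).filter (fun c => decide (c ∈ rows.getD r ∅)))

lemma pairsAt_eq_greedy (n : ℕ) (rows : List (Finset ℕ)) (r : ℕ) :
    pairsAt n rows r = greedyRun (rows.getD (r - 1) ∅) (ordAt n rows r) := by
  rw [pairsAt, ordAt]
  exact foldl_greedy _ _ []

lemma ordAt_nodup (n : ℕ) (rows : List (Finset ℕ)) (r : ℕ) : (ordAt n rows r).Nodup := by
  refine (sortKeyDesc_perm _ _).nodup_iff.2 (List.Nodup.filter _ ?_)
  refine List.Nodup.map ?_ (List.nodup_range (n := n))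
  intro a b h
  simp only at h
  omega

lemma ordAt_toFinset (n : ℕ) (rows : List (Finset ℕ)) (r : ℕ)
    (hsub : rows.getD r ∅ ⊆ Finset.Icc 1 n) :
    (ordAt n rows r).toFinset = rows.getD r ∅ := by
  have hperm := sortKeyDesc_perm (fun c => labelAt n rows (r + 1) c)
    ((colsList n).filter (fun c => decide (c ∈ rows.getD r ∅)))
  rw [ordAt]
  ext x
  rw [List.mem_toFinset, hperm.mem_iff]
  simp only [List.mem_filter, decide_eq_true_eq, mem_colsList]
  constructor
  · rintro ⟨-, h⟩; exact h
  · intro h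
    have := hsub h
    rw [Finset.mem_Icc] at this
    exact ⟨this, h⟩

lemma sublist_map_exists {α β : Type*} {f : α → β} :
    ∀ {l : List α} {s : List β}, List.Sublist s (l.map f) →
      ∃ s', List.Sublist s' l ∧ s'.map f = s := by
  intro l
  induction l with
  | nil =>
    intro s h
    simp only [List.map_nil] at h
    exact ⟨[], List.nil_sublist _, by simpa using (List.sublist_nil.1 h) ▸ rfl⟩
  | cons a l ih =>
    intro s h
    rw [List.map_cons] at h
    cases h with
    | cons _ h =>
      obtain ⟨s', hsub, heq⟩ := ih h
      exact ⟨s', hsub.cons a, heq⟩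
    | cons_cons _ h =>
      rename_i bs
      obtain ⟨s', hsub, heq⟩ := ih h
      exact ⟨a :: s', hsub.cons₂ a, by simp [heq]⟩
/-! ### Applications to multiline queues -/

lemma un_sub (n : ℕ) (a b : Finset ℕ) : ∀ x ∈ (scan n a b).2.2.2, x ∈ a := by
  intro x hx
  have : x ∈ F1 n a := (scanOK n a b).mb_union ▸
    Finset.mem_union_right _ (List.mem_toFinset.2 hx)
  exact (mem_F1.1 this).1

lemma Rcyl_sub (n : ℕ) (a b : Finset ℕ) : Rcyl n a b ⊆ a := by
  intro x hx
  rcases Finset.mem_union.1 hx with h | h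
  · exact theta_sub n a b h
  · rw [List.mem_toFinset] at h
    exact un_sub n a b x (List.mem_of_mem_take h)

lemma Rtup_sub_head (n : ℕ) (b : Finset ℕ) (l : List (Finset ℕ)) :
    Rtup n (b :: l) ⊆ b := by
  cases l with
  | nil => exact fun x h => h
  | cons c rest => exact Rcyl_sub n b _

section MLQ

variable {n : ℕ} {M : List (Finset ℕ)}

/-- The set of balls of (1-indexed) row `r` whose label is `≥ m + r - 1`. -/
def SR (n : ℕ) (M : List (Finset ℕ)) (r m : ℕ) : Finset ℕ :=
  Rtup n ((M.drop (r - 1)).take m)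

lemma SR_sub_row (r m : ℕ) (hm : 1 ≤ m) (hr : 1 ≤ r) :
    SR n M r m ⊆ M.getD (r - 1) ∅ := by
  rw [SR]
  rcases lt_or_ge (r - 1) M.length with h | h
  · rw [List.drop_eq_getElem_cons h]
    obtain ⟨m', rfl⟩ : ∃ m', m = m' + 1 := ⟨m - 1, by omega⟩
    rw [List.take_succ_cons]
    have : M[r-1] = M.getD (r-1) ∅ := (List.getD_eq_getElem M ∅ h).symm
    rw [this]
    exact Rtup_sub_head n _ _
  · rw [List.drop_eq_nil_of_le h]
    simp [Rtup]

lemma SR_stab (r : ℕ) {m m' : ℕ} (h : M.length - (r - 1) ≤ m)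
    (h' : M.length - (r - 1) ≤ m') : SR n M r m = SR n M r m' := by
  rw [SR, SR, List.take_of_length_le (by rw [List.length_drop]; omega),
    List.take_of_length_le (by rw [List.length_drop]; omega)]

lemma SR_rec (r m : ℕ) (hm : 1 ≤ m) (hr : 1 ≤ r) (hrL : r < M.length) :
    SR n M r (m + 1) = Rcyl n (M.getD (r - 1) ∅) (SR n M (r + 1) m) := by
  rw [SR, SR, List.drop_eq_getElem_cons (by omega : r - 1 < M.length), List.take_succ_cons]
  have h1 : M[r-1] = M.getD (r-1) ∅ := (List.getD_eq_getElem M ∅ (by omega)).symm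
  have h2 : r + 1 - 1 = (r - 1) + 1 := by omega
  rw [h1, h2]
  obtain ⟨m', rfl⟩ : ∃ m', m = m' + 1 := ⟨m - 1, by omega⟩
  cases htail : (M.drop (r - 1 + 1)).take (m' + 1) with
  | nil =>
    exfalso
    have : (M.drop (r - 1 + 1)).length ≥ 1 := by
      rw [List.length_drop]; omega
    have := List.length_take (i := m' + 1) (l := M.drop (r - 1 + 1))
    rw [htail] at this
    simp at this
    omega
  | cons c rest => rw [Rtup]

variable (hrow : ∀ j, M.getD j ∅ ⊆ Finset.Icc 1 n)

include hrow in
lemma SR_sub_Icc (r m : ℕ) (hr : 1 ≤ r) : SR n M r m ⊆ Finset.Icc 1 n := by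
  rcases Nat.eq_zero_or_pos m with rfl | hm
  · rw [SR]
    simp [Rtup]
  · exact (SR_sub_row r m hm hr).trans (hrow (r - 1))

variable (hnw : maj n M = 0)

include hnw in
lemma wrap0 : ∀ k r ℓ, 2 ≤ r → r ≤ ℓ → M.length + 1 ≤ ℓ + k → wrapCount n M r ℓ = 0 := by
  intro k
  induction k with
  | zero =>
    intro r ℓ h2 hrl hL
    rw [wrapCount, Sset, if_neg (by omega)]
    simp
  | succ k ih =>
    intro r ℓ h2 hrl hL
    rcases le_or_gt (M.length + 1) (ℓ + k) with h | h
    · exact ih r ℓ h2 hrl h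
    · have hlL : ℓ ≤ M.length := by omega
      have hm : mWrap n M ℓ r = 0 := by
        have hsum := hnw
        rw [maj] at hsum
        have h1 := (Finset.sum_eq_zero_iff.1 hsum) ℓ (Finset.mem_Icc.2 ⟨by omega, hlL⟩)
        have h2' := (Finset.sum_eq_zero_iff.1 h1) r (Finset.mem_Icc.2 ⟨h2, hrl⟩)
        rcases Nat.mul_eq_zero.1 h2' with h | h
        · exact h
        · omega
      have hnext : wrapCount n M r (ℓ + 1) = 0 := ih r (ℓ + 1) h2 (by omega) (by omega)
      rw [mWrap, hnext] at hm
      omega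

include hrow hnw in
lemma full_theta (r ℓ : ℕ) (h2 : 2 ≤ r) (hrl : r ≤ ℓ) (hlL : ℓ ≤ M.length) :
    (theta n (M.getD (r - 2) ∅) (Sset n M r ℓ)).card = (Sset n M r ℓ).card := by
  have hw := wrap0 hnw (M.length + 1) r ℓ h2 hrl (by omega)
  rw [wrapCount] at hw
  have hsub : Sset n M r ℓ ⊆ Finset.Icc 1 n := by
    rw [Sset, if_pos hlL]
    exact SR_sub_Icc hrow r (ℓ + 1 - r) (by omega)
  have := theta_card_le n (M.getD (r - 2) ∅) (Sset n M r ℓ) hsub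
  omega

include hrow hnw in
/-- Fullness for the level sets `SR (r+1) m` against row `r`. -/
lemma full_SR (r m : ℕ) (hr : 1 ≤ r) (hm : 1 ≤ m) (hrL : r < M.length) :
    (theta n (M.getD (r - 1) ∅) (SR n M (r + 1) m)).card = (SR n M (r + 1) m).card := by
  rcases le_or_gt m (M.length - r) with h | h
  · have key := full_theta hrow hnw (r + 1) (m + r) (by omega) (by omega) (by omega)
    have hS : Sset n M (r + 1) (m + r) = SR n M (r + 1) m := by
      rw [Sset, if_pos (by omega : m + r ≤ M.length), SR]
      congr 1
      congr 1
      omega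
    have hg : r + 1 - 2 = r - 1 := by omega
    rw [hS, hg] at key
    exact key
  · have hstab : SR n M (r + 1) m = SR n M (r + 1) (M.length - r) := by
      apply SR_stab
      · have : r + 1 - 1 = r := by omega
        rw [this]; omega
      · have : r + 1 - 1 = r := by omega
        rw [this]
    rw [hstab]
    have key := full_theta hrow hnw (r + 1) M.length (by omega) (by omega) (le_refl _)
    have hS : Sset n M (r + 1) M.length = SR n M (r + 1) (M.length - r) := by
      rw [Sset, if_pos (le_refl _), SR]
      congr 2
      omega
    have hg : r + 1 - 2 = r - 1 := by omega
    rw [hS, hg] at key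
    exact key

end MLQ
lemma theta_mono {n : ℕ} {a S T : Finset ℕ} (ha : a ⊆ Finset.Icc 1 n)
    (hS : S ⊆ Finset.Icc 1 n) (hT : T ⊆ Finset.Icc 1 n) (hST : S ⊆ T)
    (hfS : (theta n a S).card = S.card) (hfT : (theta n a T).card = T.card) :
    theta n a S ⊆ theta n a T := by
  classical
  set l₁ := S.sort (· ≤ ·) with hl₁
  set l₂ := (T \ S).sort (· ≤ ·) with hl₂
  have hn₁ : l₁.Nodup := S.sort_nodup _
  have hn₂ : l₂.Nodup := (T \ S).sort_nodup _
  have ht₁ : l₁.toFinset = S := S.sort_toFinset _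
  have ht₂ : l₂.toFinset = T \ S := (T \ S).sort_toFinset _
  have hn : (l₁ ++ l₂).Nodup := by
    rw [List.nodup_append]
    refine ⟨hn₁, hn₂, ?_⟩
    intro x hx y hy hxy
    subst hxy
    have h1 : x ∈ S := ht₁ ▸ List.mem_toFinset.2 hx
    have h2 : x ∈ T \ S := ht₂ ▸ List.mem_toFinset.2 hy
    exact (Finset.mem_sdiff.1 h2).2 h1
  have ht : (l₁ ++ l₂).toFinset = T := by
    rw [List.toFinset_append, ht₁, ht₂]
    exact Finset.union_sdiff_of_subset hST
  have hb₁ := bridge ha hS hn₁ ht₁ hfS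
  have hb₂ := bridge ha hT hn ht hfT
  rw [← hb₁, ← hb₂]
  have H : HallL (l₁ ++ l₂) a := hall_of_full hT hfT hn ht
  rw [greedy_append H]
  intro x hx
  rw [List.mem_toFinset] at hx ⊢
  rw [List.map_append, List.mem_append]
  exact Or.inl hx

section MLQ2

variable {n : ℕ} {M : List (Finset ℕ)}

lemma SR_one (r : ℕ) (hr : 1 ≤ r) (hrL : r - 1 < M.length) :
    SR n M r 1 = M.getD (r - 1) ∅ := by
  rw [SR, List.drop_eq_getElem_cons hrL]
  have : M[r-1] = M.getD (r-1) ∅ := (List.getD_eq_getElem M ∅ hrL).symm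
  rw [List.take_succ_cons, List.take_zero, this, Rtup]

variable (hrow : ∀ j, M.getD j ∅ ⊆ Finset.Icc 1 n) (hnw : maj n M = 0)

include hrow hnw in
lemma nest_all : ∀ k r, 1 ≤ r → M.length ≤ r + k → ∀ m, 1 ≤ m →
    SR n M r (m + 1) ⊆ SR n M r m := by
  intro k
  induction k with
  | zero =>
    intro r hr hL m hm
    exact subset_of_eq (SR_stab r (by omega) (by omega))
  | succ k ih =>
    intro r hr hL m hm
    rcases le_or_gt M.length (r + k) with h | h
    · exact ih r hr h m hm
    · have hrL : r < M.length := by omega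
      rw [SR_rec r m hm hr hrL]
      have hfm := full_SR hrow hnw r m hr hm hrL
      have hSm : SR n M (r + 1) m ⊆ Finset.Icc 1 n := SR_sub_Icc hrow (r + 1) m (by omega)
      have hcol := (full_consequences hSm hfm).2.2
      rw [hcol]
      rcases Nat.lt_or_ge m 2 with hm2 | hm2
      · have : m = 1 := by omega
        subst this
        rw [SR_one r hr (by omega)]
        exact theta_sub n _ _
      · obtain ⟨m', rfl⟩ : ∃ m', m = m' + 1 := ⟨m - 1, by omega⟩
        rw [SR_rec r m' (by omega) hr hrL]
        have hfm' := full_SR hrow hnw r m' hr (by omega) hrL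
        have hSm' : SR n M (r + 1) m' ⊆ Finset.Icc 1 n :=
          SR_sub_Icc hrow (r + 1) m' (by omega)
        rw [(full_consequences hSm' hfm').2.2]
        exact theta_mono (hrow (r - 1)) hSm hSm'
          (ih (r + 1) (by omega) (by omega) m' (by omega)) hfm hfm'

include hrow hnw in
lemma nest (r m : ℕ) (hr : 1 ≤ r) (hm : 1 ≤ m) :
    SR n M r (m + 1) ⊆ SR n M r m :=
  nest_all hrow hnw M.length r hr (by omega) m hm

include hrow hnw in
lemma nest_chain (r : ℕ) (hr : 1 ≤ r) : ∀ m k, 1 ≤ m → m ≤ k →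
    SR n M r k ⊆ SR n M r m := by
  intro m k hm hmk
  induction k, hmk using Nat.le_induction with
  | base => exact subset_refl _
  | succ k hk ihk => exact (nest hrow hnw r k hr (by omega)).trans ihk

lemma SR_take (r k : ℕ) : Rtup n ((M.drop (r - 1)).take k) = SR n M r k := rfl

include hrow hnw in
lemma botLabel_ge_iff (r : ℕ) (hr : 1 ≤ r) (c m : ℕ) (hm : 1 ≤ m)
    (hmlen : m ≤ M.length - (r - 1)) :
    m ≤ botLabel n (M.drop (r - 1)) c ↔ c ∈ SR n M r m := by
  rw [botLabel]
  constructor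
  · intro hsup
    have hbot : (⊥ : ℕ) < m := by rw [Nat.bot_eq_zero]; omega
    rw [Finset.le_sup_iff hbot] at hsup
    obtain ⟨k, hk, hfk⟩ := hsup
    by_cases hmem : c ∈ Rtup n ((M.drop (r - 1)).take k)
    · rw [if_pos hmem] at hfk
      rw [SR_take] at hmem
      exact nest_chain hrow hnw r hr m k hm hfk hmem
    · rw [if_neg hmem] at hfk
      omega
  · intro hmem
    have hrange : m ∈ Finset.range ((M.drop (r - 1)).length + 1) := by
      rw [Finset.mem_range, List.length_drop]
      omega
    calc m = (if c ∈ Rtup n ((M.drop (r - 1)).take m) then m else 0) := by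
          rw [SR_take, if_pos hmem]
      _ ≤ _ := Finset.le_sup (f := fun k => if c ∈ Rtup n ((M.drop (r - 1)).take k) then k else 0)
          hrange

lemma botLabel_le_len (r : ℕ) (c : ℕ) :
    botLabel n (M.drop (r - 1)) c ≤ M.length - (r - 1) := by
  rw [botLabel]
  apply Finset.sup_le
  intro k hk
  rw [Finset.mem_range, List.length_drop] at hk
  split
  · omega
  · omega

include hrow hnw in
lemma labelAt_eq_botLabel (r c : ℕ) (hr : 1 ≤ r) (hrL : r ≤ M.length)
    (hc : c ∈ M.getD (r - 1) ∅) :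
    labelAt n M r c = botLabel n (M.drop (r - 1)) c + (r - 1) := by
  have h1 : c ∈ SR n M r 1 := by rw [SR_one r hr (by omega)]; exact hc
  have hpos : 1 ≤ botLabel n (M.drop (r - 1)) c :=
    (botLabel_ge_iff hrow hnw r hr c 1 (le_refl _) (by omega)).2 h1
  rw [labelAt, if_pos ⟨hr, by omega⟩]

end MLQ2
lemma mem_dropWhile_key {key : ℕ → ℕ} {m' : ℕ} :
    ∀ {l : List ℕ}, l.Pairwise (fun a b => key b ≤ key a) →
      ∀ x ∈ l.dropWhile (fun c => decide (m' ≤ key c)), key x < m' := by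
  intro l
  induction l with
  | nil => intro _ x hx; simp at hx
  | cons a as ih =>
    intro hs x hx
    rw [List.pairwise_cons] at hs
    by_cases h : m' ≤ key a
    · rw [List.dropWhile_cons, if_pos (by simpa using h)] at hx
      exact ih hs.2 x hx
    · rw [List.dropWhile_cons, if_neg (by simpa using h)] at hx
      rcases List.mem_cons.1 hx with rfl | hx
      · omega
      · have := hs.1 x hx
        omega

section MLQ3

variable {n : ℕ} {M : List (Finset ℕ)}
variable (hrow : ∀ j, M.getD j ∅ ⊆ Finset.Icc 1 n) (hnw : maj n M = 0)

/-- The prefix of the order list consisting of balls with label `≥ m + r`. -/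
def Pref (n : ℕ) (M : List (Finset ℕ)) (r m : ℕ) : List ℕ :=
  (ordAt n M r).takeWhile (fun c => decide (m + r ≤ labelAt n M (r + 1) c))

include hrow hnw in
lemma top_full (r : ℕ) (hr : 1 ≤ r) (hrL : r < M.length) :
    (theta n (M.getD (r - 1) ∅) (M.getD r ∅)).card = (M.getD r ∅).card := by
  have h1 := full_SR hrow hnw r 1 hr (le_refl _) hrL
  have h2 : SR n M (r + 1) 1 = M.getD r ∅ := by
    have := SR_one (n := n) (M := M) (r + 1) (by omega) (by
      simp only [Nat.add_sub_cancel]; omega)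
    simpa using this
  rwa [h2] at h1

include hrow hnw in
lemma hallAt (r : ℕ) (hr : 1 ≤ r) (hrL : r < M.length) :
    HallL (ordAt n M r) (M.getD (r - 1) ∅) :=
  hall_of_full (hrow r) (top_full hrow hnw r hr hrL) (ordAt_nodup n M r)
    (ordAt_toFinset n M r (hrow r))

include hrow hnw in
lemma pairsAt_fst (r : ℕ) (hr : 1 ≤ r) (hrL : r < M.length) :
    (pairsAt n M r).map Prod.fst = ordAt n M r := by
  rw [pairsAt_eq_greedy]
  exact greedy_fst (hallAt hrow hnw r hr hrL)

include hrow hnw in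
lemma pairsAt_fst_inj (r : ℕ) (hr : 1 ≤ r) (hrL : r < M.length) :
    ∀ p ∈ pairsAt n M r, ∀ q ∈ pairsAt n M r, p.1 = q.1 → p = q := by
  have h := pairsAt_fst hrow hnw r hr hrL
  have hnd : ((pairsAt n M r).map Prod.fst).Nodup := h ▸ ordAt_nodup n M r
  exact fun p hp q hq => List.inj_on_of_nodup_map hnd hp hq

include hrow hnw in
lemma pairsAt_snd_inj (r : ℕ) (hr : 1 ≤ r) (hrL : r < M.length) :
    ∀ p ∈ pairsAt n M r, ∀ q ∈ pairsAt n M r, p.2 = q.2 → p = q := by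
  have hnd : ((pairsAt n M r).map Prod.snd).Nodup := by
    rw [pairsAt_eq_greedy]
    exact greedy_tgt_nodup (hallAt hrow hnw r hr hrL)
  exact fun p hp q hq => List.inj_on_of_nodup_map hnd hp hq

include hrow hnw in
lemma pairedTo_iff (r : ℕ) (hr : 1 ≤ r) (hrL : r < M.length) (c t : ℕ) :
    pairedTo n M r c = some t ↔ (c, t) ∈ pairsAt n M r := by
  constructor
  · intro h
    rw [pairedTo] at h
    cases hf : (pairsAt n M r).find? (fun p => decide (p.1 = c)) with
    | none => rw [hf] at h; simp at h
    | some p =>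
      rw [hf] at h
      simp only [Option.map_some] at h
      have hp1 : p.1 = c := by
        have := List.find?_some hf
        simpa using this
      have hpm : p ∈ pairsAt n M r := List.mem_of_find?_eq_some hf
      have : p = (c, t) := by
        obtain ⟨p1, p2⟩ := p
        simp only [Option.some.injEq] at h
        simp only at hp1
        rw [hp1, h]
      exact this ▸ hpm
  · intro h
    rw [pairedTo]
    cases hf : (pairsAt n M r).find? (fun p => decide (p.1 = c)) with
    | none =>
      exfalso
      have := List.find?_eq_none.1 hf (c, t) h
      simp at this
    | some p =>
      have hp1 : p.1 = c := by
        have := List.find?_some hf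
        simpa using this
      have hpm : p ∈ pairsAt n M r := List.mem_of_find?_eq_some hf
      have : p = (c, t) := pairsAt_fst_inj hrow hnw r hr hrL p hpm (c, t) h (by simpa using hp1)
      rw [this]
      rfl

include hrow hnw in
lemma pref_toFinset (r m : ℕ) (hr : 1 ≤ r) (hrL : r < M.length) (hm : 1 ≤ m)
    (hmL : m ≤ M.length - r) :
    (Pref n M r m).toFinset = SR n M (r + 1) m := by
  have hsorted := sortKeyDesc_sorted (fun c => labelAt n M (r + 1) c)
    ((colsList n).filter (fun c => decide (c ∈ M.getD r ∅)))
  have hordsorted : (ordAt n M r).Pairwise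
      (fun a b => labelAt n M (r + 1) b ≤ labelAt n M (r + 1) a) := hsorted
  ext x
  rw [List.mem_toFinset]
  constructor
  · intro hx
    have hxord : x ∈ ordAt n M r := (List.takeWhile_sublist _).subset hx
    have hpred : m + r ≤ labelAt n M (r + 1) x := by
      have := List.mem_takeWhile_imp hx
      simpa using this
    have hxtop : x ∈ M.getD r ∅ := by
      have := ordAt_toFinset n M r (hrow r) ▸ List.mem_toFinset.2 hxord
      exact this
    have heq := labelAt_eq_botLabel hrow hnw (r + 1) x (by omega) (by omega)
      (by simpa using hxtop)
    rw [heq] at hpred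
    have hbl : m ≤ botLabel n (M.drop ((r + 1) - 1)) x := by omega
    exact (botLabel_ge_iff hrow hnw (r + 1) (by omega) x m hm
      (by simp only [Nat.add_sub_cancel]; omega)).1 hbl
  · intro hx
    have hxtop : x ∈ M.getD r ∅ := by
      have := SR_sub_row (r + 1) m hm (by omega) hx
      simpa using this
    have hxord : x ∈ ordAt n M r := by
      rw [← List.mem_toFinset, ordAt_toFinset n M r (hrow r)]
      exact hxtop
    have hbl : m ≤ botLabel n (M.drop ((r + 1) - 1)) x :=
      (botLabel_ge_iff hrow hnw (r + 1) (by omega) x m hm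
        (by simp only [Nat.add_sub_cancel]; omega)).2 hx
    have heq := labelAt_eq_botLabel hrow hnw (r + 1) x (by omega) (by omega)
      (by simpa using hxtop)
    have hpred : m + r ≤ labelAt n M (r + 1) x := by
      rw [heq]
      simp only [Nat.add_sub_cancel] at hbl ⊢
      omega
    -- x is in the takeWhile part
    by_contra hnx
    have hxdrop : x ∈ (ordAt n M r).dropWhile
        (fun c => decide (m + r ≤ labelAt n M (r + 1) c)) := by
      have := List.takeWhile_append_dropWhile
        (p := fun c => decide (m + r ≤ labelAt n M (r + 1) c)) (l := ordAt n M r)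
      have hxx := hxord
      rw [← this, List.mem_append] at hxx
      rcases hxx with h | h
      · exact absurd h hnx
      · exact h
    have := mem_dropWhile_key hordsorted x hxdrop
    omega

include hrow hnw in
lemma pref_run (r m : ℕ) (hr : 1 ≤ r) (hrL : r < M.length) (hm : 1 ≤ m)
    (hmL : m ≤ M.length - r) :
    ((greedyRun (M.getD (r - 1) ∅) (Pref n M r m)).map Prod.snd).toFinset
      = SR n M r (m + 1) := by
  have hnod : (Pref n M r m).Nodup :=
    (List.takeWhile_sublist _).nodup (ordAt_nodup n M r)
  have htf := pref_toFinset hrow hnw r m hr hrL hm hmL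
  have hfull := full_SR hrow hnw r m hr hm hrL
  have hSicc : SR n M (r + 1) m ⊆ Finset.Icc 1 n := SR_sub_Icc hrow (r + 1) m (by omega)
  have hb := bridge (hrow (r - 1)) hSicc hnod htf hfull
  rw [hb, SR_rec r m hm hr hrL, (full_consequences hSicc hfull).2.2]

include hrow hnw in
lemma pairsAt_pref_sublist (r m : ℕ) (hr : 1 ≤ r) (hrL : r < M.length) :
    ∀ p ∈ greedyRun (M.getD (r - 1) ∅) (Pref n M r m), p ∈ pairsAt n M r := by
  intro p hp
  rw [pairsAt_eq_greedy]
  have hsplit : ordAt n M r = Pref n M r m ++ (ordAt n M r).dropWhile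
      (fun c => decide (m + r ≤ labelAt n M (r + 1) c)) :=
    List.takeWhile_append_dropWhile.symm
  rw [hsplit, greedy_append (hsplit ▸ hallAt hrow hnw r hr hrL)]
  exact List.mem_append.2 (Or.inl hp)

include hrow hnw in
lemma pref_run_fst (r m : ℕ) (hr : 1 ≤ r) (hrL : r < M.length) :
    (greedyRun (M.getD (r - 1) ∅) (Pref n M r m)).map Prod.fst = Pref n M r m := by
  apply greedy_fst
  have hsplit : ordAt n M r = Pref n M r m ++ (ordAt n M r).dropWhile
      (fun c => decide (m + r ≤ labelAt n M (r + 1) c)) :=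
    List.takeWhile_append_dropWhile.symm
  exact hall_prefix (hsplit ▸ hallAt hrow hnw r hr hrL)

end MLQ3
section MLQ4

variable {n : ℕ} {M : List (Finset ℕ)}
variable (hrow : ∀ j, M.getD j ∅ ⊆ Finset.Icc 1 n) (hnw : maj n M = 0)

lemma strand_len_le {s : List ℕ} (hs : IsStrand n M s) : s.length ≤ M.length := by
  obtain ⟨hne, hmem, -, -⟩ := hs
  have h1 : 1 ≤ s.length := List.length_pos_iff.2 hne
  by_contra h
  push_neg at h
  have := hmem (s.length - 1) (by omega)
  rw [List.getD_eq_default _ _ (by omega : M.length ≤ s.length - 1)] at this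
  exact absurd this (Finset.notMem_empty _)

include hrow hnw in
lemma strand_botLabel {s : List ℕ} (hs : IsStrand n M s) :
    ∀ t, 1 ≤ t → t ≤ s.length →
      botLabel n (M.drop (t - 1)) (s.getD (t - 1) 0) = s.length - t + 1 := by
  obtain ⟨hne, hmem, hpair, htop⟩ := hs
  have hlen : 1 ≤ s.length := List.length_pos_iff.2 hne
  have hsL : s.length ≤ M.length := strand_len_le ⟨hne, hmem, hpair, htop⟩
  set h := s.length with hh
  have key : ∀ d t, 1 ≤ t → t ≤ h → h - t = d →
      botLabel n (M.drop (t - 1)) (s.getD (t - 1) 0) = h - t + 1 := by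
    intro d
    induction d with
    | zero =>
      intro t ht1 hth htd
      have hteq : t = h := by omega
      have hball : s.getD (t - 1) 0 ∈ M.getD (t - 1) ∅ := hmem (t - 1) (by omega)
      have hge : 1 ≤ botLabel n (M.drop (t - 1)) (s.getD (t - 1) 0) := by
        refine (botLabel_ge_iff hrow hnw t ht1 _ 1 (le_refl _) (by omega)).2 ?_
        rw [SR_one t ht1 (by omega)]
        exact hball
      have hle : botLabel n (M.drop (t - 1)) (s.getD (t - 1) 0) ≤ 1 := by
        by_cases hL : t < M.length
        · by_contra hgt
          push_neg at hgt
          have h2 : s.getD (t - 1) 0 ∈ SR n M t 2 :=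
            (botLabel_ge_iff hrow hnw t ht1 _ 2 (by omega) (by omega)).1 hgt
          rw [SR_rec t 1 (le_refl _) ht1 hL] at h2
          have hS1 : SR n M (t + 1) 1 = M.getD t ∅ := by
            have := SR_one (n := n) (M := M) (t + 1) (by omega)
              (by simp only [Nat.add_sub_cancel]; omega)
            simpa using this
          have hfull := top_full hrow hnw t ht1 hL
          have hcol : Rcyl n (M.getD (t - 1) ∅) (SR n M (t + 1) 1)
              = theta n (M.getD (t - 1) ∅) (M.getD t ∅) := by
            rw [hS1]
            exact (full_consequences (hrow t) (by rw [← hS1] at hfull; rwa [hS1] at hfull)).2.2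
          rw [hcol] at h2
          have hb := bridge (hrow (t - 1)) (hrow t) (ordAt_nodup n M t)
            (ordAt_toFinset n M t (hrow t)) hfull
          rw [← hb, ← pairsAt_eq_greedy] at h2
          rw [List.mem_toFinset] at h2
          obtain ⟨p, hp, hps⟩ := List.mem_map.1 h2
          have : pairedTo n M t p.1 = some (s.getD (t - 1) 0) := by
            rw [pairedTo_iff hrow hnw t ht1 hL]
            have : p = (p.1, s.getD (t - 1) 0) := by
              obtain ⟨p1, p2⟩ := p
              simp only at hps
              rw [hps]
            exact this ▸ hp
          have htop' := htop p.1
          rw [← hteq] at htop'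
          exact absurd this htop'
        · have := botLabel_le_len (n := n) (M := M) t (s.getD (t - 1) 0)
          omega
      omega
    | succ d ih =>
      intro t ht1 hth htd
      have hth' : t < h := by omega
      have hbl1 := ih (t + 1) (by omega) (by omega) (by omega)
      simp only [Nat.add_sub_cancel] at hbl1
      set m := h - t with hm
      have hm1 : 1 ≤ m := by omega
      have hmt : h - (t + 1) + 1 = m := by omega
      rw [hmt] at hbl1
      have hrL : t < M.length := by omega
      have hmL : m ≤ M.length - t := by omega
      -- lower bound: the target lies in SR t (m+1)
      have hup : s.getD t 0 ∈ SR n M (t + 1) m := by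
        refine (botLabel_ge_iff hrow hnw (t + 1) (by omega) _ m hm1
          (by simp only [Nat.add_sub_cancel]; omega)).1 ?_
        simp only [Nat.add_sub_cancel]
        omega
      have hpref : s.getD t 0 ∈ Pref n M t m := by
        rw [← List.mem_toFinset, pref_toFinset hrow hnw t m ht1 hrL hm1 hmL]
        exact hup
      obtain ⟨p, hp, hp1⟩ : ∃ p ∈ greedyRun (M.getD (t - 1) ∅) (Pref n M t m),
          p.1 = s.getD t 0 := by
        have : s.getD t 0 ∈ (greedyRun (M.getD (t - 1) ∅) (Pref n M t m)).map Prod.fst := by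
          rw [pref_run_fst hrow hnw t m ht1 hrL]
          exact hpref
        obtain ⟨p, hp, hps⟩ := List.mem_map.1 this
        exact ⟨p, hp, hps⟩
      have hpmem : p ∈ pairsAt n M t := pairsAt_pref_sublist hrow hnw t m ht1 hrL p hp
      have hstrandpair : (s.getD t 0, s.getD (t - 1) 0) ∈ pairsAt n M t := by
        rw [← pairedTo_iff hrow hnw t ht1 hrL]
        have := hpair (t - 1) (by omega)
        have hteq : t - 1 + 1 = t := by omega
        rw [hteq] at this
        exact this
      have hpeq : p = (s.getD t 0, s.getD (t - 1) 0) :=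
        pairsAt_fst_inj hrow hnw t ht1 hrL p hpmem _ hstrandpair (by simpa using hp1)
      have htgt : s.getD (t - 1) 0 ∈ SR n M t (m + 1) := by
        rw [← pref_run hrow hnw t m ht1 hrL hm1 hmL, List.mem_toFinset]
        exact List.mem_map.2 ⟨p, hp, by rw [hpeq]⟩
      have hge : m + 1 ≤ botLabel n (M.drop (t - 1)) (s.getD (t - 1) 0) :=
        (botLabel_ge_iff hrow hnw t ht1 _ (m + 1) (by omega) (by omega)).2 htgt
      have hle : botLabel n (M.drop (t - 1)) (s.getD (t - 1) 0) ≤ m + 1 := by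
        by_cases hL : h < M.length
        · by_contra hgt
          push_neg at hgt
          have h2 : s.getD (t - 1) 0 ∈ SR n M t (m + 2) :=
            (botLabel_ge_iff hrow hnw t ht1 _ (m + 2) (by omega) (by omega)).1 hgt
          have hmL' : m + 1 ≤ M.length - t := by omega
          rw [← pref_run hrow hnw t (m + 1) ht1 hrL (by omega) hmL'] at h2
          rw [List.mem_toFinset] at h2
          obtain ⟨q, hq, hqs⟩ := List.mem_map.1 h2
          have hqmem : q ∈ pairsAt n M t :=
            pairsAt_pref_sublist hrow hnw t (m + 1) ht1 hrL q hq
          have hqeq : q = (s.getD t 0, s.getD (t - 1) 0) :=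
            pairsAt_snd_inj hrow hnw t ht1 hrL q hqmem _ hstrandpair (by simpa using hqs)
          have hq1 : s.getD t 0 ∈ Pref n M t (m + 1) := by
            rw [← pref_run_fst hrow hnw t (m + 1) ht1 hrL]
            exact List.mem_map.2 ⟨q, hq, by rw [hqeq]⟩
          have : s.getD t 0 ∈ SR n M (t + 1) (m + 1) := by
            rw [← pref_toFinset hrow hnw t (m + 1) ht1 hrL (by omega) hmL',
              List.mem_toFinset]
            exact hq1
          have := (botLabel_ge_iff hrow hnw (t + 1) (by omega) _ (m + 1) (by omega)
            (by simp only [Nat.add_sub_cancel]; omega)).2 this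
          simp only [Nat.add_sub_cancel] at this
          omega
        · have := botLabel_le_len (n := n) (M := M) t (s.getD (t - 1) 0)
          omega
      omega
  intro t ht1 hth
  exact key (h - t) t ht1 hth rfl

include hrow hnw in
lemma strand_labelAt {s : List ℕ} (hs : IsStrand n M s) (r : ℕ) (hr1 : 1 ≤ r)
    (hrs : r + 1 ≤ s.length) :
    labelAt n M (r + 1) (s.getD r 0) = s.length := by
  have hball : s.getD r 0 ∈ M.getD r ∅ := hs.2.1 r (by omega)
  have hsL := strand_len_le hs
  have heq := labelAt_eq_botLabel hrow hnw (r + 1) (s.getD r 0) (by omega) (by omega)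
    (by simpa using hball)
  have hbl := strand_botLabel hrow hnw hs (r + 1) (by omega) hrs
  simp only [Nat.add_sub_cancel] at heq hbl
  rw [heq, hbl]
  omega

end MLQ4
lemma sublist_of_lt_asc {x y : ℕ} :
    ∀ {l : List ℕ}, l.Pairwise (· < ·) → x ∈ l → y ∈ l → x < y →
      List.Sublist [x, y] l := by
  intro l
  induction l with
  | nil => intro _ hx; simp at hx
  | cons a as ih =>
    intro hs hx hy hxy
    rw [List.pairwise_cons] at hs
    rcases List.mem_cons.1 hx with rfl | hx2
    · have hy' : y ∈ as := by
        rcases List.mem_cons.1 hy with rfl | hy'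
        · omega
        · exact hy'
      exact (List.singleton_sublist.2 hy').cons₂ x
    · have hy' : y ∈ as := by
        rcases List.mem_cons.1 hy with heq | hy'
        · exfalso; have := hs.1 x hx2; omega
        · exact hy'
      exact (ih hs.2 hx2 hy' hxy).cons a

lemma colsList_filter_pairwise (n : ℕ) (p : ℕ → Bool) :
    ((colsList n).filter p).Pairwise (· < ·) := by
  apply List.Pairwise.filter
  rw [colsList]
  refine List.Pairwise.map _ ?_ (List.pairwise_lt_range (n := n))
  intro a b hab
  simpa using hab

section MLQ5

variable {n : ℕ} {M : List (Finset ℕ)}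
variable (hrow : ∀ j, M.getD j ∅ ⊆ Finset.Icc 1 n) (hnw : maj n M = 0)
variable {s1 s2 : List ℕ} (h1 : IsStrand n M s1) (h2 : IsStrand n M s2)
variable (hk : s2.length ≤ s1.length)

include hrow hnw h1 h2 hk in
lemma step_left (r : ℕ) (hr : 1 ≤ r) (hrl : r + 1 ≤ s2.length)
    (hlt : s1.getD r 0 < s2.getD r 0) : s1.getD (r - 1) 0 < s2.getD (r - 1) 0 := by
  have hL2 := strand_len_le h2
  have hrL : r < M.length := by omega
  set a := s1.getD r 0 with ha
  set b := s2.getD r 0 with hb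
  have hrk : r + 1 ≤ s1.length := le_trans hrl hk
  have hamem : a ∈ M.getD r ∅ := h1.2.1 r (by omega)
  have hbmem : b ∈ M.getD r ∅ := h2.2.1 r (by omega)
  have hkeya : labelAt n M (r + 1) a = s1.length := strand_labelAt hrow hnw h1 r hr hrk
  have hkeyb : labelAt n M (r + 1) b = s2.length := strand_labelAt hrow hnw h2 r hr hrl
  have haord : a ∈ ordAt n M r := by
    rw [← List.mem_toFinset, ordAt_toFinset n M r (hrow r)]
    exact hamem
  have hbord : b ∈ ordAt n M r := by
    rw [← List.mem_toFinset, ordAt_toFinset n M r (hrow r)]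
    exact hbmem
  -- a comes before b in the order list
  have hsubord : List.Sublist [a, b] (ordAt n M r) := by
    rcases lt_or_eq_of_le hk with hlt2 | heq
    · -- strictly longer: larger label, so a comes first
      exact sublist_of_key_lt (sortKeyDesc_sorted _ _) haord hbord (by omega)
    · -- equal lengths: equal labels, stability
      have hkeq : labelAt n M (r + 1) a = labelAt n M (r + 1) b := by omega
      apply sortKeyDesc_stable hkeq
      apply sublist_of_lt_asc (colsList_filter_pairwise n _) _ _ hlt
      · rw [List.mem_filter]
        have := hrow r hamem
        rw [Finset.mem_Icc] at this
        exact ⟨mem_colsList.2 this, by simpa using hamem⟩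
      · rw [List.mem_filter]
        have := hrow r hbmem
        rw [Finset.mem_Icc] at this
        exact ⟨mem_colsList.2 this, by simpa using hbmem⟩
  -- the corresponding pairs
  have hpa : (a, s1.getD (r - 1) 0) ∈ pairsAt n M r := by
    rw [← pairedTo_iff hrow hnw r hr hrL]
    have := h1.2.2.1 (r - 1) (by omega)
    have hre : r - 1 + 1 = r := by omega
    rw [hre] at this
    exact this
  have hpb : (b, s2.getD (r - 1) 0) ∈ pairsAt n M r := by
    rw [← pairedTo_iff hrow hnw r hr hrL]
    have := h2.2.2.1 (r - 1) (by omega)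
    have hre : r - 1 + 1 = r := by omega
    rw [hre] at this
    exact this
  -- lift the sublist to the run
  have hfst := pairsAt_fst hrow hnw r hr hrL
  have hsubrun : List.Sublist [a, b] ((pairsAt n M r).map Prod.fst) := hfst ▸ hsubord
  obtain ⟨s', hsub', hmap⟩ := sublist_map_exists hsubrun
  have : ∃ p q, s' = [p, q] := by
    cases s' with
    | nil => simp at hmap
    | cons p s'' =>
      cases s'' with
      | nil => simp at hmap
      | cons q s''' =>
        cases s''' with
        | nil => exact ⟨p, q, rfl⟩
        | cons w s4 => simp at hmap
  obtain ⟨p, q, rfl⟩ := this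
  simp only [List.map_cons, List.map_nil, List.cons.injEq, and_true] at hmap
  obtain ⟨hp1, hq1⟩ := hmap
  have hpm : p ∈ pairsAt n M r := hsub'.subset (by simp)
  have hqm : q ∈ pairsAt n M r := hsub'.subset (by simp)
  have hpeq : p = (a, s1.getD (r - 1) 0) :=
    pairsAt_fst_inj hrow hnw r hr hrL p hpm _ hpa (by simpa using hp1)
  have hqeq : q = (b, s2.getD (r - 1) 0) :=
    pairsAt_fst_inj hrow hnw r hr hrL q hqm _ hpb (by simpa using hq1)
  rw [hpeq, hqeq] at hsub'
  rw [pairsAt_eq_greedy] at hsub'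
  exact greedy_order (hallAt hrow hnw r hr hrL) _ _ _ _ hsub' hlt

include hrow hnw h1 h2 hk in
lemma chain_down : ∀ j, j + 2 ≤ s2.length → s1.getD j 0 < s2.getD j 0 →
    ∀ i, i ≤ j → s1.getD i 0 < s2.getD i 0 := by
  intro j
  induction j with
  | zero =>
    intro _ hlt i hi
    have : i = 0 := by omega
    rw [this]
    exact hlt
  | succ j ih =>
    intro hj hlt i hi
    rcases Nat.eq_or_lt_of_le hi with rfl | hi2
    · exact hlt
    · have hstep := step_left hrow hnw h1 h2 hk (j + 1) (by omega) (by omega) hlt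
      simp only [Nat.add_sub_cancel] at hstep
      exact ih (by omega) hstep i (by omega)

include h1 h2 in
lemma eq_down (j : ℕ) (hj : 1 ≤ j) (hjl : j + 1 ≤ s2.length) (hjk : j + 1 ≤ s1.length)
    (heq : s1.getD j 0 = s2.getD j 0) : s1.getD (j - 1) 0 = s2.getD (j - 1) 0 := by
  have hp1 := h1.2.2.1 (j - 1) (by omega)
  have hp2 := h2.2.2.1 (j - 1) (by omega)
  have hre : j - 1 + 1 = j := by omega
  rw [hre] at hp1 hp2
  rw [heq] at hp1
  rw [hp1] at hp2
  exact Option.some_injective _ hp2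

end MLQ5

/-- Let `M` be a nonwrapping multiline queue and `s₁, s₂` two
strands of lengths `k ≥ ℓ` with row-1 balls `y₁, y₂`.  Say they intersect between
rows `t` and `t−1` (`1 < t ≤ ℓ`) if the left-to-right order of their balls in row
`t` differs from that in row `t−1`.  Then `s₁` and `s₂` intersect at most once,
and if they intersect then `y₁` lies strictly to the left of `y₂`. -/
theorem statement14 (n : ℕ) (hn : 1 ≤ n) (lam : List ℕ) (hlam : IsPartitionL lam)
    (hlen : lam.length < n) (M : List (Finset ℕ)) (hM : IsMLQ n lam M)
    (hnw : maj n M = 0) (s1 s2 : List ℕ)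
    (h1 : IsStrand n M s1) (h2 : IsStrand n M s2) (hk : s2.length ≤ s1.length) :
    (∀ t t' : ℕ, 1 < t → t ≤ s2.length → 1 < t' → t' ≤ s2.length →
      ((s1.getD (t - 1) 0 < s2.getD (t - 1) 0) ↔
        ¬ (s1.getD (t - 2) 0 < s2.getD (t - 2) 0)) →
      ((s1.getD (t' - 1) 0 < s2.getD (t' - 1) 0) ↔
        ¬ (s1.getD (t' - 2) 0 < s2.getD (t' - 2) 0)) →
      t = t') ∧
    ((∃ t : ℕ, 1 < t ∧ t ≤ s2.length ∧
        ((s1.getD (t - 1) 0 < s2.getD (t - 1) 0) ↔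
          ¬ (s1.getD (t - 2) 0 < s2.getD (t - 2) 0))) →
      s1.getD 0 0 < s2.getD 0 0) := by
  -- basic setup
  have hrow : ∀ j, M.getD j ∅ ⊆ Finset.Icc 1 n := by
    intro j
    rcases lt_or_ge j M.length with hj | hj
    · have : M.getD j ∅ = M[j] := List.getD_eq_getElem M ∅ hj
      rw [this]
      exact hM.2.1 _ (List.getElem_mem hj)
    · rw [List.getD_eq_default _ _ hj]
      exact Finset.empty_subset _
  -- shape of an intersection
  have hshape : ∀ t : ℕ, 1 < t → t ≤ s2.length →
      ((s1.getD (t - 1) 0 < s2.getD (t - 1) 0) ↔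
        ¬ (s1.getD (t - 2) 0 < s2.getD (t - 2) 0)) →
      s2.getD (t - 1) 0 < s1.getD (t - 1) 0 ∧ s1.getD (t - 2) 0 < s2.getD (t - 2) 0 := by
    intro t ht1 htl hiff
    have hnA : ¬ (s1.getD (t - 1) 0 < s2.getD (t - 1) 0) := by
      intro hA
      have hB := step_left hrow hnw h1 h2 hk (t - 1) (by omega) (by omega) hA
      have he : t - 1 - 1 = t - 2 := by omega
      rw [he] at hB
      exact (hiff.1 hA) hB
    have hne : s1.getD (t - 1) 0 ≠ s2.getD (t - 1) 0 := by
      intro heq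
      have heq2 := eq_down h1 h2 (t - 1) (by omega) (by omega) (by omega) heq
      have he : t - 1 - 1 = t - 2 := by omega
      rw [he] at heq2
      have hA : s1.getD (t - 1) 0 < s2.getD (t - 1) 0 := by
        apply hiff.2
        rw [heq2]
        omega
      omega
    have hB : s1.getD (t - 2) 0 < s2.getD (t - 2) 0 := by
      by_contra hB
      exact hnA (hiff.2 hB)
    exact ⟨by omega, hB⟩
  constructor
  · -- at most one intersection
    intro t t' ht1 htl ht1' htl' hiff hiff'
    obtain ⟨hgt, hlt⟩ := hshape t ht1 htl hiff
    obtain ⟨hgt', hlt'⟩ := hshape t' ht1' htl' hiff'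
    by_contra hne
    rcases Nat.lt_or_ge t t' with h | h
    · -- t < t' : propagate t'-shape down to row t
      have := chain_down hrow hnw h1 h2 hk (t' - 2) (by omega) hlt' (t - 1) (by omega)
      omega
    · have htt : t' < t := by omega
      have := chain_down hrow hnw h1 h2 hk (t - 2) (by omega) hlt (t' - 1) (by omega)
      omega
  · -- if they intersect, y₁ is strictly left of y₂
    rintro ⟨t, ht1, htl, hiff⟩
    obtain ⟨hgt, hlt⟩ := hshape t ht1 htl hiff
    exact chain_down hrow hnw h1 h2 hk (t - 2) (by omega) hlt 0 (by omega)

end MultilineQueue
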